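/- arXiv:math/0702629 — 8 statements merged into one kernel-verified Lean document; each statement's English description precedes it below -/
import Mathlib

section
/- Let $S=\Bbbk[x_1,\dots,x_n]$ and let $d\geq 0$. For every $k$ with $1\leq k\leq n$, the sum of ideals $\sum_{j=1}^{k} (x_1,\dots,x_j)(x_j,x_{j+1},\dots,x_n)^d$ equals the ideal $(x_1,\dots,x_k)(x_1,x_2,\dots,x_n)^d$. -/
open MvPolynomial

def IsMonomialIdeal {K : Type*} [Field K] {n : ℕ}
    (I : Ideal (MvPolynomial (Fin n) K)) : Prop :=
  ∃ S : Set (Fin n →₀ ℕ), I = Ideal.span ((fun u => monomial u (1 : K)) '' S)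

def IsBorelFixed {K : Type*} [Field K] {n : ℕ}
    (I : Ideal (MvPolynomial (Fin n) K)) : Prop :=
  ∀ u : Fin n →₀ ℕ, monomial u (1 : K) ∈ I →
    ∀ t s : Fin n, s < t → u t ≠ 0 →
      monomial (u - Finsupp.single t 1 + Finsupp.single s 1) (1 : K) ∈ I

noncomputable def borelClosure {K : Type*} [Field K] {n : ℕ}
    (ms : Set (Fin n →₀ ℕ)) : Ideal (MvPolynomial (Fin n) K) :=
  sInf {J | IsMonomialIdeal J ∧ IsBorelFixed J ∧ ∀ u ∈ ms, monomial u (1 : K) ∈ J}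

noncomputable def varsIdeal (K : Type*) [Field K] (n : ℕ) (a b : ℕ) :
    Ideal (MvPolynomial (Fin n) K) :=
  Ideal.span { p | ∃ i : Fin n, a ≤ (i : ℕ) + 1 ∧ (i : ℕ) + 1 ≤ b ∧ p = X i }



lemma varsIdeal_mono (K : Type*) [Field K] (n : ℕ) {a b a' b' : ℕ}
    (ha : a' ≤ a) (hb : b ≤ b') :
    varsIdeal K n a b ≤ varsIdeal K n a' b' := by
  apply Ideal.span_mono
  rintro p ⟨i, h1, h2, rfl⟩
  exact ⟨i, ha.trans h1, h2.trans hb, rfl⟩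

lemma varsIdeal_split (K : Type*) [Field K] (n : ℕ) {a m b : ℕ}
    (h1 : a ≤ m + 1) (h2 : m ≤ b) :
    varsIdeal K n a b = varsIdeal K n a m ⊔ varsIdeal K n (m+1) b := by
  rw [varsIdeal, varsIdeal, varsIdeal, ← Ideal.span_union]
  congr 1
  ext p
  constructor
  · rintro ⟨i, hai, hib, rfl⟩
    rcases le_or_gt ((i : ℕ)+1) m with h | h
    · exact Or.inl ⟨i, hai, h, rfl⟩
    · exact Or.inr ⟨i, h, hib, rfl⟩
  · rintro (⟨i, hai, him, rfl⟩ | ⟨i, hmi, hib, rfl⟩)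
    · exact ⟨i, hai, him.trans h2, rfl⟩
    · exact ⟨i, h1.trans hmi, hib, rfl⟩

lemma ideal_pow_mono {R : Type*} [CommSemiring R] {I J : Ideal R} (h : I ≤ J) :
    ∀ m : ℕ, I ^ m ≤ J ^ m := by
  intro m
  induction m with
  | zero => simp
  | succ m ih =>
    rw [pow_succ, pow_succ]
    exact Ideal.mul_mono ih h

lemma key_lemma {R : Type*} [CommSemiring R] (P Ik J M : Ideal R)
    (hP : P ≤ M) (hJ : J ≤ M) (hM : M = Ik ⊔ J) :
    ∀ d : ℕ, P * M ^ d ≤ Ik * M ^ d ⊔ P * J ^ d := by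
  intro d
  induction d with
  | zero => simp
  | succ d ih =>
    have h1 : P * M ^ (d+1) = P * M ^ d * M := by ring
    rw [h1]
    calc P * M ^ d * M ≤ (Ik * M ^ d ⊔ P * J ^ d) * M := Ideal.mul_mono_left ih
      _ = Ik * M ^ d * M ⊔ P * J ^ d * M := Ideal.sup_mul _ _ _
      _ ≤ Ik * M ^ (d+1) ⊔ P * J ^ (d+1) := by
          apply sup_le
          · apply le_sup_of_le_left
            apply le_of_eq; ring
          · nth_rewrite 1 [hM]
            rw [Ideal.mul_sup]
            apply sup_le
            · apply le_sup_of_le_left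
              have : P * J ^ d * Ik = Ik * (P * J ^ d) := by ring
              rw [this]
              apply Ideal.mul_mono_right
              calc P * J ^ d ≤ M * M ^ d := Ideal.mul_mono hP (ideal_pow_mono hJ d)
                _ = M ^ (d+1) := by ring
            · apply le_sup_of_le_right
              apply le_of_eq; ring


theorem stmt0 {K : Type*} [Field K] (n d k : ℕ) (hk1 : 1 ≤ k) (hkn : k ≤ n) :
    (∑ j ∈ Finset.Icc 1 k, varsIdeal K n 1 j * (varsIdeal K n j n) ^ d)
      = varsIdeal K n 1 k * (varsIdeal K n 1 n) ^ d := by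
  induction k, hk1 using Nat.le_induction with
  | base =>
    rw [Finset.Icc_self, Finset.sum_singleton]
  | succ k hk ih =>
    rw [Finset.sum_Icc_succ_top (by omega : 1 ≤ k+1), ih (by omega)]
    have hIk : varsIdeal K n 1 (k+1) = varsIdeal K n 1 k ⊔ varsIdeal K n (k+1) (k+1) :=
      varsIdeal_split K n (by omega) (by omega)
    have hMk : varsIdeal K n 1 n = varsIdeal K n 1 k ⊔ varsIdeal K n (k+1) n :=
      varsIdeal_split K n (by omega) (by omega)
    have hPle : varsIdeal K n (k+1) (k+1) ≤ varsIdeal K n (k+1) n :=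
      varsIdeal_mono K n le_rfl (by omega)
    have hJle : varsIdeal K n (k+1) n ≤ varsIdeal K n 1 n :=
      varsIdeal_mono K n (by omega) le_rfl
    have hIkle : varsIdeal K n 1 k ≤ varsIdeal K n 1 (k+1) :=
      varsIdeal_mono K n le_rfl (by omega)
    have hPle' : varsIdeal K n (k+1) (k+1) ≤ varsIdeal K n 1 (k+1) :=
      varsIdeal_mono K n (by omega) le_rfl
    apply le_antisymm
    · apply sup_le
      · exact Ideal.mul_mono_left hIkle
      · exact Ideal.mul_mono_right (ideal_pow_mono hJle d)
    · nth_rewrite 1 [hIk]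
      rw [Ideal.sup_mul]
      apply sup_le
      · exact le_sup_left
      · calc varsIdeal K n (k+1) (k+1) * varsIdeal K n 1 n ^ d
            ≤ varsIdeal K n 1 k * varsIdeal K n 1 n ^ d
              ⊔ varsIdeal K n (k+1) (k+1) * varsIdeal K n (k+1) n ^ d :=
            key_lemma _ _ _ _ (hPle.trans hJle) hJle hMk d
          _ ≤ _ := by
            apply sup_le
            · exact le_sup_left
            · exact le_sup_of_le_right (Ideal.mul_mono_left hPle')
end

section
/- Let $S=\Bbbk[x_1,\dots,x_n]$, $d\geq 0$, and $1\leq k< n$. Then $(x_1,\dots,x_k)(x_1,\dots,x_n)^{d}\;\cap\;(x_1,\dots,x_{k+1})(x_{k+1},\dots,x_n)^d \;=\;(x_1,\dots,x_k)(x_{k+1},\dots,x_n)^d$. -/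
open MvPolynomial

namespace Stmt1Aux

open Finsupp

variable {K : Type*} [Field K] {n : ℕ}

/-- sums of `d` singles with indices in `P` -/
def msSet (P : Finset (Fin n)) : ℕ → Set (Fin n →₀ ℕ)
  | 0 => {0}
  | d + 1 => {e | ∃ j ∈ P, ∃ f ∈ msSet P d, e = Finsupp.single j 1 + f}

lemma msSet_mono {P Q : Finset (Fin n)} (h : P ⊆ Q) (d : ℕ) :
    msSet P d ⊆ msSet Q d := by
  induction d with
  | zero => exact subset_rfl
  | succ d ih =>
    rintro e ⟨j, hj, f, hf, rfl⟩
    exact ⟨j, h hj, f, ih hf, rfl⟩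

lemma msSet_spec {P : Finset (Fin n)} {d : ℕ} {e : Fin n →₀ ℕ} (he : e ∈ msSet P d) :
    (∀ j, j ∉ P → e j = 0) ∧ ∑ j ∈ P, e j = d := by
  induction d generalizing e with
  | zero =>
    obtain rfl : e = 0 := he
    simp
  | succ d ih =>
    obtain ⟨j, hj, f, hf, rfl⟩ := he
    obtain ⟨h1, h2⟩ := ih hf
    constructor
    · intro i hi
      rw [Finsupp.add_apply, Finsupp.single_apply,
        if_neg (by rintro rfl; exact hi hj), h1 i hi]
    · simp only [Finsupp.add_apply]
      rw [Finset.sum_add_distrib, h2, Finset.sum_eq_single j]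
      · rw [Finsupp.single_apply, if_pos rfl]; omega
      · intro b _ hb
        rw [Finsupp.single_apply, if_neg (fun h => hb h.symm)]
      · intro h; exact absurd hj h

lemma msSet_extract {P : Finset (Fin n)} {d : ℕ} {u : Fin n →₀ ℕ}
    (h : d ≤ ∑ j ∈ P, u j) : ∃ e ∈ msSet P d, e ≤ u := by
  induction d generalizing u with
  | zero => exact ⟨0, rfl, bot_le⟩
  | succ d ih =>
    have hpos : 0 < ∑ j ∈ P, u j := lt_of_lt_of_le (Nat.succ_pos d) h
    obtain ⟨j, hjP, hj⟩ : ∃ j ∈ P, u j ≠ 0 := by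
      by_contra hc
      push_neg at hc
      rw [Finset.sum_eq_zero hc] at hpos
      exact lt_irrefl 0 hpos
    set v : Fin n →₀ ℕ := u - Finsupp.single j 1 with hv
    have hvapp : ∀ i, v i = u i - (Finsupp.single j (1:ℕ)) i := by
      intro i; rw [hv, Finsupp.tsub_apply]
    have hle : d ≤ ∑ i ∈ P, v i := by
      have hcongr : ∀ i ∈ P, u i = v i + (if j = i then 1 else 0) := by
        intro i _
        rw [hvapp i, Finsupp.single_apply]
        rcases eq_or_ne j i with rfl | hne
        · simp only [eq_self_iff_true, if_true]; omega
        · simp only [hne, if_false]; omega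
      have hsum : ∑ i ∈ P, u i = (∑ i ∈ P, v i) + 1 := by
        rw [Finset.sum_congr rfl hcongr, Finset.sum_add_distrib,
          Finset.sum_ite_eq P j (fun _ => (1:ℕ)), if_pos hjP]
      omega
    obtain ⟨e, he, hle'⟩ := ih hle
    refine ⟨Finsupp.single j 1 + e, ⟨j, hjP, e, he, rfl⟩, ?_⟩
    rw [Finsupp.le_def]
    intro i
    have h1 := Finsupp.le_def.mp hle' i
    rw [hvapp i] at h1
    rw [Finsupp.add_apply]
    rcases eq_or_ne i j with rfl | hne
    · rw [Finsupp.single_apply, if_pos rfl] at h1 ⊢; omega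
    · rw [Finsupp.single_apply, if_neg (fun h => hne h.symm)] at h1 ⊢; omega

lemma span_monomial_mul (S T : Set (Fin n →₀ ℕ)) :
    Ideal.span ((fun u => monomial u (1:K)) '' S) * Ideal.span ((fun u => monomial u (1:K)) '' T)
      = Ideal.span ((fun u => monomial u (1:K)) '' {e | ∃ s ∈ S, ∃ t ∈ T, e = s + t}) := by
  rw [Ideal.span_mul_span']
  congr 1
  ext p
  constructor
  · rintro ⟨_, ⟨s, hs, rfl⟩, _, ⟨t, ht, rfl⟩, rfl⟩
    exact ⟨s + t, ⟨s, hs, t, ht, rfl⟩, by simp [monomial_mul]⟩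
  · rintro ⟨_, ⟨s, hs, t, ht, rfl⟩, rfl⟩
    exact ⟨_, ⟨s, hs, rfl⟩, _, ⟨t, ht, rfl⟩, by simp [monomial_mul]⟩

lemma span_singles_pow (P : Finset (Fin n)) (d : ℕ) :
    (Ideal.span ((fun u => monomial u (1:K)) '' {e | ∃ j ∈ P, e = Finsupp.single j 1})) ^ d
      = Ideal.span ((fun u => monomial u (1:K)) '' msSet P d) := by
  induction d with
  | zero =>
    rw [pow_zero]
    have h0 : (msSet P 0 : Set (Fin n →₀ ℕ)) = {0} := rfl
    rw [h0]
    simp [Ideal.one_eq_top, Ideal.span_singleton_one]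
  | succ d ih =>
    rw [pow_succ', ih, span_monomial_mul]
    congr 1
    ext e
    constructor
    · rintro ⟨x, ⟨s, ⟨j, hj, rfl⟩, t, ht, rfl⟩, rfl⟩
      exact ⟨_, ⟨j, hj, t, ht, rfl⟩, rfl⟩
    · rintro ⟨x, ⟨j, hj, t, ht, rfl⟩, rfl⟩
      exact ⟨_, ⟨_, ⟨j, hj, rfl⟩, t, ht, rfl⟩, rfl⟩

lemma varsIdeal_eq (a b : ℕ) :
    varsIdeal K n a b = Ideal.span ((fun u => monomial u (1:K)) ''
      {e | ∃ j ∈ Finset.univ.filter (fun i : Fin n => a ≤ (i : ℕ) + 1 ∧ (i : ℕ) + 1 ≤ b),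
        e = Finsupp.single j 1}) := by
  unfold varsIdeal
  congr 1
  ext p
  simp only [Set.mem_setOf_eq, Set.mem_image, Finset.mem_filter, Finset.mem_univ, true_and]
  constructor
  · rintro ⟨i, h1, h2, rfl⟩
    exact ⟨Finsupp.single i 1, ⟨i, ⟨h1, h2⟩, rfl⟩, rfl⟩
  · rintro ⟨_, ⟨i, ⟨h1, h2⟩, rfl⟩, rfl⟩
    exact ⟨i, h1, h2, rfl⟩

end Stmt1Aux

theorem stmt1 {K : Type*} [Field K] (n d k : ℕ) (hk1 : 1 ≤ k) (hkn : k < n) :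
    (varsIdeal K n 1 k * (varsIdeal K n 1 n) ^ d)
        ⊓ (varsIdeal K n 1 (k + 1) * (varsIdeal K n (k + 1) n) ^ d)
      = varsIdeal K n 1 k * (varsIdeal K n (k + 1) n) ^ d := by
  classical
  set PA := Finset.univ.filter (fun i : Fin n => 1 ≤ (i : ℕ) + 1 ∧ (i : ℕ) + 1 ≤ k) with hPA
  set PB := Finset.univ.filter (fun i : Fin n => 1 ≤ (i : ℕ) + 1 ∧ (i : ℕ) + 1 ≤ n) with hPB
  set PC := Finset.univ.filter (fun i : Fin n => 1 ≤ (i : ℕ) + 1 ∧ (i : ℕ) + 1 ≤ k + 1) with hPC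
  set PD := Finset.univ.filter (fun i : Fin n => k + 1 ≤ (i : ℕ) + 1 ∧ (i : ℕ) + 1 ≤ n) with hPD
  have hDB : PD ⊆ PB := by
    intro x hx
    simp only [hPD, hPB, Finset.mem_filter, Finset.mem_univ, true_and] at hx ⊢
    omega
  have hAC : PA ⊆ PC := by
    intro x hx
    simp only [hPA, hPC, Finset.mem_filter, Finset.mem_univ, true_and] at hx ⊢
    omega
  rw [Stmt1Aux.varsIdeal_eq 1 k, Stmt1Aux.varsIdeal_eq 1 n, Stmt1Aux.varsIdeal_eq 1 (k+1),
    Stmt1Aux.varsIdeal_eq (k+1) n, Stmt1Aux.span_singles_pow, Stmt1Aux.span_singles_pow,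
    Stmt1Aux.span_monomial_mul, Stmt1Aux.span_monomial_mul, Stmt1Aux.span_monomial_mul]
  ext g
  simp only [Submodule.mem_inf]
  rw [mem_ideal_span_monomial_image, mem_ideal_span_monomial_image,
    mem_ideal_span_monomial_image]
  constructor
  · rintro ⟨hA, hB⟩ u hu
    obtain ⟨e1, ⟨s1, ⟨i, hi, rfl⟩, f1, hf1, rfl⟩, he1⟩ := hA u hu
    obtain ⟨e2, ⟨s2, ⟨i2, hi2, rfl⟩, f2, hf2, rfl⟩, he2⟩ := hB u hu
    have hui : 1 ≤ u i := by
      have h1 := Finsupp.le_def.mp he1 i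
      have : 1 ≤ ((Finsupp.single i 1 + f1 : Fin n →₀ ℕ)) i := by
        rw [Finsupp.add_apply, Finsupp.single_apply, if_pos rfl]; omega
      omega
    have hsum : d ≤ ∑ j ∈ PD, u j := by
      have hspec := (Stmt1Aux.msSet_spec hf2).2
      calc d = ∑ j ∈ PD, f2 j := hspec.symm
        _ ≤ ∑ j ∈ PD, u j := by
          apply Finset.sum_le_sum
          intro j _
          have h2 := Finsupp.le_def.mp he2 j
          have : f2 j ≤ ((Finsupp.single i2 1 + f2 : Fin n →₀ ℕ)) j := by
            rw [Finsupp.add_apply]; omega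
          omega
    obtain ⟨f3, hf3, hle3⟩ := Stmt1Aux.msSet_extract hsum
    refine ⟨Finsupp.single i 1 + f3, ⟨Finsupp.single i 1, ⟨i, hi, rfl⟩, f3, hf3, rfl⟩, ?_⟩
    rw [Finsupp.le_def]
    intro m
    have h0 := (Stmt1Aux.msSet_spec hf3).1
    have h3 := Finsupp.le_def.mp hle3 m
    rcases eq_or_ne m i with rfl | hne
    · have hiPD : m ∉ PD := by
        simp only [hPA, Finset.mem_filter, Finset.mem_univ, true_and] at hi
        simp only [hPD, Finset.mem_filter, Finset.mem_univ, true_and]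
        omega
      rw [Finsupp.add_apply, Finsupp.single_apply, if_pos rfl, h0 m hiPD]
      omega
    · rw [Finsupp.add_apply, Finsupp.single_apply, if_neg (fun h => hne h.symm)]
      omega
  · intro h
    constructor <;> intro u hu <;>
      obtain ⟨e, ⟨s, ⟨i, hi, rfl⟩, t, ht, rfl⟩, he⟩ := h u hu
    · exact ⟨_, ⟨Finsupp.single i 1, ⟨i, hi, rfl⟩, t, Stmt1Aux.msSet_mono hDB d ht, rfl⟩, he⟩
    · exact ⟨_, ⟨Finsupp.single i 1, ⟨i, hAC hi, rfl⟩, t, ht, rfl⟩, he⟩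
end

section
/- For a monomial $\mathbf{m}=x_{\lambda_1}^{d_1}x_{\lambda_2}^{d_2}\cdots x_{\lambda_s}^{d_s}$ with $1\leq\lambda_1<\lambda_2<\cdots<\lambda_s\leq n$ and $d_j\geq 1$, the smallest Borel fixed ideal containing $\mathbf{m}$ equals the product of powers of initial segment ideals: $\langle\mathbf{m}\rangle=\prod_{j=1}^{s} (x_1,x_2,\dots,x_{\lambda_j})^{d_j}$. -/
open MvPolynomial

/- ---------- Auxiliary material ---------- -/

open Pointwise Finset

section Aux

variable {K : Type*} [Field K] {n : ℕ}

/-- Membership of a monomial in a monomial ideal. -/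
lemma monMem {u : Fin n →₀ ℕ} {S : Set (Fin n →₀ ℕ)} :
    monomial u (1 : K) ∈ Ideal.span ((fun u => monomial u (1 : K)) '' S) ↔ ∃ g ∈ S, g ≤ u := by
  rw [mem_ideal_span_monomial_image]
  simp [support_monomial]

/-- Product of two monomial ideals. -/
lemma spanMul (A B : Set (Fin n →₀ ℕ)) :
    Ideal.span ((fun u => monomial u (1 : K)) '' A) *
      Ideal.span ((fun u => monomial u (1 : K)) '' B)
      = Ideal.span ((fun u => monomial u (1 : K)) '' (A + B)) := by
  rw [Ideal.span_mul_span']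
  congr 1
  ext p
  constructor
  · rintro ⟨x, ⟨a, ha, rfl⟩, y, ⟨b, hb, rfl⟩, rfl⟩
    exact ⟨a + b, ⟨a, ha, b, hb, rfl⟩, by simp [monomial_mul]⟩
  · rintro ⟨u, ⟨a, ha, b, hb, rfl⟩, rfl⟩
    exact ⟨monomial a 1, ⟨a, ha, rfl⟩, monomial b 1, ⟨b, hb, rfl⟩, by simp [monomial_mul]⟩

/-- Finite products of monomial ideals. -/
lemma prodSpan {ι : Type*} [DecidableEq ι] (t : Finset ι) (A : ι → Set (Fin n →₀ ℕ)) :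
    (∏ j ∈ t, Ideal.span ((fun u => monomial u (1 : K)) '' A j))
      = Ideal.span ((fun u => monomial u (1 : K)) ''
          {u | ∃ a : ι → (Fin n →₀ ℕ), (∀ j ∈ t, a j ∈ A j) ∧ u = ∑ j ∈ t, a j}) := by
  induction t using Finset.induction_on with
  | empty =>
    have h1 : {u : Fin n →₀ ℕ |
        ∃ a : ι → (Fin n →₀ ℕ), (∀ j ∈ (∅ : Finset ι), a j ∈ A j) ∧ u = ∑ j ∈ (∅ : Finset ι), a j}
        = {0} := by
      ext u
      simp only [Finset.notMem_empty, false_implies, implies_true, true_and, Finset.sum_empty,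
        Set.mem_setOf_eq, Set.mem_singleton_iff]
      exact ⟨fun ⟨a, h⟩ => h, fun h => ⟨fun _ => 0, h⟩⟩
    rw [h1]
    simp only [Finset.prod_empty, Set.image_singleton, monomial_zero']
    rw [Ideal.one_eq_top]
    simp [Ideal.span_singleton_one]
  | @insert i t hi ih =>
    rw [Finset.prod_insert hi, ih, spanMul]
    have hset : A i + {u | ∃ a : ι → (Fin n →₀ ℕ), (∀ j ∈ t, a j ∈ A j) ∧ u = ∑ j ∈ t, a j}
        = {u | ∃ a : ι → (Fin n →₀ ℕ),
            (∀ j ∈ insert i t, a j ∈ A j) ∧ u = ∑ j ∈ insert i t, a j} := by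
      ext u
      simp only [Set.mem_add, Set.mem_setOf_eq]
      constructor
      · rintro ⟨b, hb, w, ⟨a, ha, rfl⟩, rfl⟩
        refine ⟨Function.update a i b, ?_, ?_⟩
        · intro j hj
          rcases Finset.mem_insert.mp hj with rfl | hj
          · rwa [Function.update_self]
          · rw [Function.update_of_ne (ne_of_mem_of_not_mem hj hi)]
            exact ha j hj
        · rw [Finset.sum_insert hi, Function.update_self]
          congr 1
          exact Finset.sum_congr rfl fun j hj => by
            rw [Function.update_of_ne (ne_of_mem_of_not_mem hj hi)]
      · rintro ⟨a, ha, rfl⟩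
        exact ⟨a i, ha i (Finset.mem_insert_self i t), ∑ j ∈ t, a j,
          ⟨a, fun j hj => ha j (Finset.mem_insert_of_mem hj), rfl⟩,
          (Finset.sum_insert hi).symm⟩
    rw [hset]

/-- Value of the Borel exchange on exponent vectors. -/
lemma appVal (u : Fin n →₀ ℕ) (t s i : Fin n) :
    ((u - Finsupp.single t 1 + Finsupp.single s 1 : Fin n →₀ ℕ)) i
      = u i - (if t = i then 1 else 0) + (if s = i then 1 else 0) := by
  rw [Finsupp.add_apply, Finsupp.tsub_apply, Finsupp.single_apply, Finsupp.single_apply]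

end Aux

section Main

variable {K : Type*} [Field K] {n s : ℕ} (lam : Fin s → Fin n) (d : Fin s → ℕ)

/-- The generating exponents of the product ideal. -/
def genSet (lam : Fin s → Fin n) (d : Fin s → ℕ) : Set (Fin n →₀ ℕ) :=
  {u | ∃ f : ((j : Fin s) × Fin (d j)) → Fin n,
    (∀ x, (f x : ℕ) ≤ (lam x.1 : ℕ)) ∧ u = ∑ x, Finsupp.single (f x) 1}

lemma sigma_sum (f : ((j : Fin s) × Fin (d j)) → Fin n) :
    ∑ x, Finsupp.single (f x) (1 : ℕ)
      = ∑ j, ∑ k : Fin (d j), Finsupp.single (f ⟨j, k⟩) (1 : ℕ) := by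
  rw [Finset.sum_sigma' Finset.univ (fun _ => Finset.univ)
    (fun j k => (Finsupp.single (f ⟨j, k⟩) 1 : Fin n →₀ ℕ)), Finset.univ_sigma_univ]

lemma msum :
    (∑ j, Finsupp.single (lam j) (d j)) = ∑ x : ((j : Fin s) × Fin (d j)),
      Finsupp.single (lam x.1) (1 : ℕ) := by
  rw [sigma_sum]
  refine Finset.sum_congr rfl fun j _ => ?_
  simp [Finset.sum_const, Finsupp.smul_single]

lemma m_mem_genSet : (∑ j, Finsupp.single (lam j) (d j)) ∈ genSet lam d :=
  ⟨fun x => lam x.1, fun _ => le_refl _, msum lam d⟩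

/-- The product ideal equals the span of the generating monomials. -/
lemma prod_eq_span :
    (∏ j, (varsIdeal K n 1 ((lam j : ℕ) + 1)) ^ (d j))
      = Ideal.span ((fun u => monomial u (1 : K)) '' genSet lam d) := by
  classical
  have hV : ∀ j, varsIdeal K n 1 ((lam j : ℕ) + 1)
      = Ideal.span ((fun u => monomial u (1 : K)) ''
          {u | ∃ i : Fin n, (i : ℕ) ≤ (lam j : ℕ) ∧ u = Finsupp.single i 1}) := by
    intro j
    unfold varsIdeal
    congr 1
    ext p
    constructor
    · rintro ⟨i, _, h2, rfl⟩
      exact ⟨Finsupp.single i 1, ⟨i, by omega, rfl⟩, rfl⟩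
    · rintro ⟨u, ⟨i, hi, rfl⟩, rfl⟩
      exact ⟨i, by omega, by omega, rfl⟩
  have hpow : ∀ j, (varsIdeal K n 1 ((lam j : ℕ) + 1)) ^ (d j)
      = ∏ _k : Fin (d j), varsIdeal K n 1 ((lam j : ℕ) + 1) := by
    intro j; rw [Finset.prod_const, Finset.card_univ, Fintype.card_fin]
  calc (∏ j, (varsIdeal K n 1 ((lam j : ℕ) + 1)) ^ (d j))
      = ∏ j, ∏ _k : Fin (d j), varsIdeal K n 1 ((lam j : ℕ) + 1) :=
        Finset.prod_congr rfl fun j _ => hpow j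
    _ = ∏ x : ((j : Fin s) × Fin (d j)), varsIdeal K n 1 ((lam x.1 : ℕ) + 1) := by
        rw [Finset.prod_sigma' Finset.univ (fun _ => Finset.univ)
          (fun j (_ : Fin (d j)) => varsIdeal K n 1 ((lam j : ℕ) + 1)), Finset.univ_sigma_univ]
    _ = ∏ x : ((j : Fin s) × Fin (d j)), Ideal.span ((fun u => monomial u (1 : K)) ''
          {u | ∃ i : Fin n, (i : ℕ) ≤ (lam x.1 : ℕ) ∧ u = Finsupp.single i 1}) :=
        Finset.prod_congr rfl fun x _ => hV x.1
    _ = Ideal.span ((fun u => monomial u (1 : K)) '' genSet lam d) := by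
        rw [prodSpan]
        have hset : {u | ∃ a : ((j : Fin s) × Fin (d j)) → (Fin n →₀ ℕ),
            (∀ x ∈ Finset.univ, a x ∈ {u | ∃ i : Fin n, (i : ℕ) ≤ (lam x.1 : ℕ)
              ∧ u = Finsupp.single i 1}) ∧ u = ∑ x, a x} = genSet lam d := by
          ext u
          simp only [Set.mem_setOf_eq, Finset.mem_univ, true_implies, genSet]
          constructor
          · rintro ⟨a, ha, rfl⟩
            choose f hf1 hf2 using ha
            exact ⟨f, hf1, Finset.sum_congr rfl fun x _ => hf2 x⟩
          · rintro ⟨f, hf, rfl⟩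
            exact ⟨fun x => Finsupp.single (f x) 1, fun x => ⟨f x, hf x, rfl⟩, rfl⟩
        rw [hset]

/-- The span of the generating monomials is Borel fixed. -/
lemma borelG : IsBorelFixed (Ideal.span ((fun u => monomial u (1 : K)) '' genSet lam d)) := by
  classical
  intro u hu t s' hst hut
  rw [monMem] at hu ⊢
  obtain ⟨g, ⟨f, hf, rfl⟩, hle⟩ := hu
  have hle' : ∀ i, ((∑ x, Finsupp.single (f x) (1 : ℕ)) : Fin n →₀ ℕ) i ≤ u i :=
    Finsupp.le_def.mp hle
  have happ : ∀ (f : ((j : Fin s) × Fin (d j)) → Fin n) (i : Fin n),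
      ((∑ x, Finsupp.single (f x) (1 : ℕ)) : Fin n →₀ ℕ) i
        = ∑ x, (if f x = i then 1 else 0) := by
    intro f i
    rw [Finsupp.finset_sum_apply]
    exact Finset.sum_congr rfl fun x _ => Finsupp.single_apply
  have hne : s' ≠ t := ne_of_lt hst
  by_cases hgt : ((∑ x, Finsupp.single (f x) (1 : ℕ)) : Fin n →₀ ℕ) t = u t
  · -- the generator uses variable t; exchange it
    have hgt0 : ((∑ x, Finsupp.single (f x) (1 : ℕ)) : Fin n →₀ ℕ) t ≠ 0 := hgt ▸ hut
    have hex : ∃ x0, f x0 = t := by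
      by_contra h
      push_neg at h
      exact hgt0 (by rw [happ]; exact Finset.sum_eq_zero fun x _ => if_neg (h x))
    obtain ⟨x0, hx0⟩ := hex
    have hup0 : Function.update f x0 s' x0 = s' := Function.update_self x0 s' f
    have hupne : ∀ x ∈ Finset.univ.erase x0, Function.update f x0 s' x = f x :=
      fun x hx => Function.update_of_ne (Finset.ne_of_mem_erase hx) s' f
    refine ⟨∑ x, Finsupp.single (Function.update f x0 s' x) 1,
      ⟨Function.update f x0 s', fun x => ?_, rfl⟩, ?_⟩
    · by_cases hx : x = x0
      · subst hx
        rw [hup0]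
        calc (s' : ℕ) ≤ (t : ℕ) := le_of_lt hst
          _ = (f x : ℕ) := by rw [hx0]
          _ ≤ (lam x.1 : ℕ) := hf x
      · rw [Function.update_of_ne hx]
        exact hf x
    · rw [Finsupp.le_def]
      intro i
      rw [appVal]
      have e1 : ((∑ x, Finsupp.single (f x) (1 : ℕ)) : Fin n →₀ ℕ) i
          = (if t = i then 1 else 0)
            + ∑ x ∈ Finset.univ.erase x0, (if f x = i then 1 else 0) := by
        rw [happ, ← Finset.add_sum_erase _ _ (Finset.mem_univ x0), hx0]
      have e2 : ((∑ x, Finsupp.single (Function.update f x0 s' x) (1 : ℕ)) : Fin n →₀ ℕ) i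
          = (if s' = i then 1 else 0)
            + ∑ x ∈ Finset.univ.erase x0, (if f x = i then 1 else 0) := by
        rw [happ, ← Finset.add_sum_erase _ _ (Finset.mem_univ x0), hup0]
        congr 1
        exact Finset.sum_congr rfl fun x hx => by rw [hupne x hx]
      have h1 := hle' i
      rw [e1] at h1
      rw [e2]
      by_cases h2 : t = i
      · have h3 : ¬ (s' = i) := fun h => hne (h.trans h2.symm)
        rw [if_pos h2] at h1
        rw [if_neg h3, if_pos h2]
        omega
      · rw [if_neg h2] at h1
        rw [if_neg h2]
        by_cases h3 : s' = i
        · rw [if_pos h3]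
          omega
        · rw [if_neg h3]
          omega
  · -- the generator still divides the exchanged monomial
    refine ⟨∑ x, Finsupp.single (f x) 1, ⟨f, hf, rfl⟩, ?_⟩
    rw [Finsupp.le_def]
    intro i
    rw [appVal]
    have h1 := hle' i
    have h2 : ((∑ x, Finsupp.single (f x) (1 : ℕ)) : Fin n →₀ ℕ) t < u t :=
      lt_of_le_of_ne (hle' t) hgt
    by_cases hti : t = i
    · subst hti
      rw [if_pos rfl, if_neg hne]
      omega
    · rw [if_neg hti]
      by_cases h3 : s' = i
      · rw [if_pos h3]
        omega
      · rw [if_neg h3]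
        omega

/-- Every Borel fixed ideal containing the monomial contains all generators. -/
lemma gen_mem (J : Ideal (MvPolynomial (Fin n) K)) (hJB : IsBorelFixed J)
    (hm : monomial (∑ j, Finsupp.single (lam j) (d j)) (1 : K) ∈ J) :
    ∀ f : ((j : Fin s) × Fin (d j)) → Fin n, (∀ x, (f x : ℕ) ≤ (lam x.1 : ℕ)) →
      monomial (∑ x, Finsupp.single (f x) 1) (1 : K) ∈ J := by
  classical
  suffices key : ∀ N (f : ((j : Fin s) × Fin (d j)) → Fin n),
      (∑ x, ((lam x.1 : ℕ) - (f x : ℕ))) = N → (∀ x, (f x : ℕ) ≤ (lam x.1 : ℕ)) →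
      monomial (∑ x, Finsupp.single (f x) 1) (1 : K) ∈ J by
    intro f hf
    exact key _ f rfl hf
  intro N
  induction N using Nat.strong_induction_on with
  | _ N ih =>
    intro f hN hf
    by_cases hall : ∀ x, (f x : ℕ) = (lam x.1 : ℕ)
    · have : (∑ x, Finsupp.single (f x) (1 : ℕ)) = ∑ j, Finsupp.single (lam j) (d j) := by
        rw [msum]
        exact Finset.sum_congr rfl fun x _ => by rw [Fin.eq_of_val_eq (hall x)]
      rw [this]
      exact hm
    · push_neg at hall
      obtain ⟨x0, hx0⟩ := hall
      have hlt : (f x0 : ℕ) < (lam x0.1 : ℕ) := lt_of_le_of_ne (hf x0) hx0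
      have htn : (f x0 : ℕ) + 1 < n := lt_of_le_of_lt hlt (lam x0.1).isLt
      set t : Fin n := ⟨(f x0 : ℕ) + 1, htn⟩ with htdef
      set f' := Function.update f x0 t with hf'def
      have hf'x0 : f' x0 = t := by rw [hf'def, Function.update_self]
      have hf'ne : ∀ x ∈ Finset.univ.erase x0, f' x = f x := fun x hx => by
        rw [hf'def, Function.update_of_ne (Finset.ne_of_mem_erase hx)]
      have hf'valid : ∀ x, (f' x : ℕ) ≤ (lam x.1 : ℕ) := by
        intro x
        by_cases hx : x = x0
        · subst hx; rw [hf'x0]; exact hlt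
        · rw [hf'def, Function.update_of_ne hx]; exact hf x
      have hmeas : (∑ x, ((lam x.1 : ℕ) - (f' x : ℕ))) < N := by
        have e1 : (∑ x, ((lam x.1 : ℕ) - (f x : ℕ)))
            = ((lam x0.1 : ℕ) - (f x0 : ℕ)) + ∑ x ∈ Finset.univ.erase x0,
                ((lam x.1 : ℕ) - (f x : ℕ)) :=
          (Finset.add_sum_erase _ _ (Finset.mem_univ x0)).symm
        have e2 : (∑ x, ((lam x.1 : ℕ) - (f' x : ℕ)))
            = ((lam x0.1 : ℕ) - (t : ℕ)) + ∑ x ∈ Finset.univ.erase x0,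
                ((lam x.1 : ℕ) - (f x : ℕ)) := by
          rw [← Finset.add_sum_erase _ _ (Finset.mem_univ x0), hf'x0]
          congr 1
          exact Finset.sum_congr rfl fun x hx => by rw [hf'ne x hx]
        rw [e2]
        rw [e1] at hN
        have : (t : ℕ) = (f x0 : ℕ) + 1 := rfl
        omega
      have hg' := ih _ hmeas f' rfl hf'valid
      -- decompose both sums
      set r : Fin n →₀ ℕ := ∑ x ∈ Finset.univ.erase x0, Finsupp.single (f x) 1 with hrdef
      have e1 : (∑ x, Finsupp.single (f x) (1 : ℕ)) = Finsupp.single (f x0) 1 + r :=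
        (Finset.add_sum_erase _ _ (Finset.mem_univ x0)).symm
      have e2 : (∑ x, Finsupp.single (f' x) (1 : ℕ)) = Finsupp.single t 1 + r := by
        rw [← Finset.add_sum_erase _ _ (Finset.mem_univ x0), hf'x0, hrdef]
        congr 1
        exact Finset.sum_congr rfl fun x hx => by rw [hf'ne x hx]
      rw [e2] at hg'
      have hst : f x0 < t := by
        rw [Fin.lt_def]
        exact Nat.lt_succ_self _
      have hut : ((Finsupp.single t 1 + r : Fin n →₀ ℕ)) t ≠ 0 := by
        rw [Finsupp.add_apply, Finsupp.single_apply, if_pos rfl]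
        omega
      have := hJB _ hg' t (f x0) hst hut
      have heq : (Finsupp.single t 1 + r) - Finsupp.single t 1 + Finsupp.single (f x0) 1
          = ∑ x, Finsupp.single (f x) 1 := by
        rw [add_tsub_cancel_left, e1, add_comm]
      rwa [heq] at this

end Main

theorem stmt5 {K : Type*} [Field K] (n s : ℕ) (lam : Fin s → Fin n)
    (hlam : StrictMono lam) (d : Fin s → ℕ) (hd : ∀ j, 1 ≤ d j) :
    borelClosure (K := K) {∑ j, Finsupp.single (lam j) (d j)}
      = ∏ j, (varsIdeal K n 1 ((lam j : ℕ) + 1)) ^ (d j) := by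
  classical
  rw [prod_eq_span]
  apply le_antisymm
  · apply sInf_le
    refine ⟨⟨genSet lam d, rfl⟩, borelG lam d, ?_⟩
    intro u hu
    rw [Set.mem_singleton_iff] at hu
    subst hu
    rw [monMem]
    exact ⟨_, m_mem_genSet lam d, le_refl _⟩
  · apply le_sInf
    rintro J ⟨hJmon, hJB, hJm⟩
    rw [Ideal.span_le]
    rintro p ⟨g, ⟨f, hf, rfl⟩, rfl⟩
    exact gen_mem lam d J hJB (hJm _ rfl) f hf
end

section
/- Let $\mathbf{m}_1$ and $\mathbf{m}_2$ be monomials of the same degree $d$ in $\Bbbk[x_1,\dots,x_n]$ with exponent vectors $(a_1,\dots,a_n)$ and $(b_1,\dots,b_n)$, and let $\mathbf{m}=\mathbf{MIN}(\mathbf{m}_1,\mathbf{m}_2)$ be the monomial with exponents $\mu_n=\min\{a_n,b_n\}$ and $\mu_i=\min\{\sum_{j\geq i}a_j,\sum_{j\geq i}b_j\}-\sum_{j>i}\mu_j$. Then $\langle\mathbf{m}_1\rangle\cap\langle\mathbf{m}_2\rangle=\langle\mathbf{m}\rangle$; in particular, the intersection of two principal Borel fixed ideals generated in the same degree is again a principal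 Borel fixed ideal. -/
open MvPolynomial

noncomputable def MINexp {n : ℕ} (a b : Fin n →₀ ℕ) : Fin n →₀ ℕ :=
  Finsupp.equivFunOnFinite.symm fun i =>
    min (∑ j ∈ Finset.Ici i, a j) (∑ j ∈ Finset.Ici i, b j)
      - min (∑ j ∈ Finset.Ioi i, a j) (∑ j ∈ Finset.Ioi i, b j)

/-! ### Auxiliary prefix-sum machinery -/

/-- prefix sum of the exponent vector `u`, over indices `< k`. -/
def pf {n : ℕ} (u : Fin n →₀ ℕ) (k : ℕ) : ℕ :=
  ∑ j ∈ Finset.range k, if h : j < n then u ⟨j, h⟩ else 0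

lemma pf_zero {n : ℕ} (u : Fin n →₀ ℕ) : pf u 0 = 0 := by simp [pf]

lemma pf_succ {n : ℕ} (u : Fin n →₀ ℕ) {k : ℕ} (h : k < n) :
    pf u (k + 1) = pf u k + u ⟨k, h⟩ := by
  rw [pf, Finset.sum_range_succ, dif_pos h]; rfl

lemma pf_succ_ge {n : ℕ} (u : Fin n →₀ ℕ) {k : ℕ} (h : n ≤ k) :
    pf u (k + 1) = pf u k := by
  rw [pf, Finset.sum_range_succ, dif_neg (by omega)]; rfl

lemma pf_mono {n : ℕ} (u : Fin n →₀ ℕ) : Monotone (pf u) := by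
  intro k l hkl
  exact Finset.sum_le_sum_of_subset (Finset.range_subset_range.2 hkl)

lemma pf_stable {n : ℕ} (u : Fin n →₀ ℕ) {k : ℕ} (h : n ≤ k) : pf u k = pf u n := by
  induction k, h using Nat.le_induction with
  | base => rfl
  | succ k hk ih => rw [pf_succ_ge u hk, ih]

lemma pf_le_top {n : ℕ} (u : Fin n →₀ ℕ) (k : ℕ) : pf u k ≤ pf u n := by
  rcases le_or_gt k n with h | h
  · exact pf_mono u h
  · rw [pf_stable u h.le]

lemma pf_le_of_le {n : ℕ} {u w : Fin n →₀ ℕ} (h : u ≤ w) (k : ℕ) : pf u k ≤ pf w k := by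
  refine Finset.sum_le_sum fun j _ => ?_
  split
  · exact h _
  · exact le_rfl

lemma pf_filter {n : ℕ} (u : Fin n →₀ ℕ) (k : ℕ) :
    pf u k = ∑ j ∈ Finset.univ.filter (fun j : Fin n => (j : ℕ) < k), u j := by
  induction k with
  | zero =>
    rw [pf_zero]
    symm
    apply Finset.sum_eq_zero
    intro j hj
    simp at hj
  | succ k ih =>
    rcases Nat.lt_or_ge k n with h | h
    · rw [pf_succ u h, ih]
      have hins : Finset.univ.filter (fun j : Fin n => (j : ℕ) < k + 1)
          = insert ⟨k, h⟩ (Finset.univ.filter (fun j : Fin n => (j : ℕ) < k)) := by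
        ext j
        simp only [Finset.mem_filter, Finset.mem_univ, true_and, Finset.mem_insert,
          Fin.ext_iff]
        omega
      rw [hins, Finset.sum_insert (by simp)]
      ring
    · rw [pf_succ_ge u h, ih]
      congr 1
      ext j
      simp only [Finset.mem_filter, Finset.mem_univ, true_and]
      have := j.isLt
      omega

lemma pf_top {n : ℕ} (u : Fin n →₀ ℕ) : pf u n = ∑ j, u j := by
  rw [pf_filter]
  congr 1
  apply Finset.filter_true_of_mem
  intro j _
  exact j.isLt

lemma pf_add_Ici {n : ℕ} (u : Fin n →₀ ℕ) (i : Fin n) :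
    pf u (i : ℕ) + ∑ j ∈ Finset.Ici i, u j = pf u n := by
  rw [pf_filter u i, pf_top]
  have : Finset.Ici i = Finset.univ.filter (fun j : Fin n => ¬ ((j : ℕ) < (i : ℕ))) := by
    ext j
    simp only [Finset.mem_Ici, Finset.mem_filter, Finset.mem_univ, true_and, not_lt, Fin.le_def]
  rw [this, Finset.sum_filter_add_sum_filter_not]

lemma pf_add_Ioi {n : ℕ} (u : Fin n →₀ ℕ) (i : Fin n) :
    pf u ((i : ℕ) + 1) + ∑ j ∈ Finset.Ioi i, u j = pf u n := by
  rw [pf_filter u ((i : ℕ) + 1), pf_top]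
  have : Finset.Ioi i = Finset.univ.filter (fun j : Fin n => ¬ ((j : ℕ) < (i : ℕ) + 1)) := by
    ext j
    simp only [Finset.mem_Ioi, Finset.mem_filter, Finset.mem_univ, true_and, not_lt, Fin.lt_def]
    omega
  rw [this, Finset.sum_filter_add_sum_filter_not]

/-- Monomials whose prefix sums dominate those of `u`. -/
def sSet {n : ℕ} (u : Fin n →₀ ℕ) : Set (Fin n →₀ ℕ) := {w | ∀ k, pf u k ≤ pf w k}

lemma sSet_self {n : ℕ} (u : Fin n →₀ ℕ) : u ∈ sSet u := fun _ => le_rfl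

lemma sSet_upward {n : ℕ} {u v w : Fin n →₀ ℕ} (hv : v ∈ sSet u) (hvw : v ≤ w) :
    w ∈ sSet u := fun k => le_trans (hv k) (pf_le_of_le hvw k)

noncomputable def bIdeal (K : Type*) [Field K] {n : ℕ} (u : Fin n →₀ ℕ) :
    Ideal (MvPolynomial (Fin n) K) :=
  Ideal.span ((fun v => monomial v (1 : K)) '' sSet u)

lemma monomial_mem_bIdeal_iff {K : Type*} [Field K] {n : ℕ} {u w : Fin n →₀ ℕ} :
    monomial w (1 : K) ∈ bIdeal K u ↔ w ∈ sSet u := by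
  rw [bIdeal, mem_ideal_span_monomial_image]
  constructor
  · intro h
    obtain ⟨v, hv, hle⟩ := h w (by simp [support_monomial])
    exact sSet_upward hv hle
  · intro h xi hxi
    simp [support_monomial] at hxi
    subst hxi
    exact ⟨w, h, le_rfl⟩

/-- Effect of a Borel move on prefix sums. -/
lemma pf_move {n : ℕ} (w : Fin n →₀ ℕ) (t s : Fin n) (hst : s < t) (hwt : w t ≠ 0) (k : ℕ) :
    pf (w - Finsupp.single t 1 + Finsupp.single s 1) k + (if (t : ℕ) < k then 1 else 0)
      = pf w k + (if (s : ℕ) < k then 1 else 0) := by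
  have key : ∀ j : Fin n, ((w - Finsupp.single t 1 + Finsupp.single s 1 : Fin n →₀ ℕ)) j
      + (if t = j then 1 else 0) = w j + (if s = j then 1 else 0) := by
    intro j
    rw [Finsupp.add_apply, Finsupp.tsub_apply, Finsupp.single_apply, Finsupp.single_apply]
    rcases eq_or_ne t j with rfl | ht
    · rw [if_neg (ne_of_lt hst), if_pos rfl]
      have := Nat.pos_of_ne_zero hwt
      omega
    · rw [if_neg ht]
      omega
  induction k with
  | zero => simp [pf_zero]
  | succ k ih =>
    rcases Nat.lt_or_ge k n with h | h
    · have hkey := key (⟨k, h⟩ : Fin n)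
      rw [pf_succ _ h, pf_succ _ h]
      simp only [show (t = (⟨k, h⟩ : Fin n)) ↔ ((t : ℕ) = k) by simp [Fin.ext_iff],
        show (s = (⟨k, h⟩ : Fin n)) ↔ ((s : ℕ) = k) by simp [Fin.ext_iff]] at hkey
      have hstv : (s : ℕ) < (t : ℕ) := hst
      split_ifs at hkey ih ⊢ <;> omega
    · rw [pf_succ_ge _ h, pf_succ_ge _ h]
      have htv := t.isLt
      have hsv := s.isLt
      split_ifs at ih ⊢ <;> omega

lemma pf_move_ge {n : ℕ} (w : Fin n →₀ ℕ) (t s : Fin n) (hst : s < t) (hwt : w t ≠ 0) (k : ℕ) :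
    pf w k ≤ pf (w - Finsupp.single t 1 + Finsupp.single s 1) k := by
  have := pf_move w t s hst hwt k
  have hstv : (s : ℕ) < (t : ℕ) := hst
  split at this <;> split at this <;> omega

/-- `w t ≠ 0` as a natural statement. -/
lemma move_deg {n : ℕ} (w : Fin n →₀ ℕ) (t s : Fin n) (hst : s < t) (hwt : w t ≠ 0) :
    pf (w - Finsupp.single t 1 + Finsupp.single s 1) n = pf w n := by
  have := pf_move w t s hst hwt n
  have htv := t.isLt; have hsv := s.isLt
  simp only [if_pos htv, if_pos hsv] at this
  omega

/-- Reachability: if `v` has the same degree as `u` and dominating prefix sums,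
then `monomial v` lies in every Borel-fixed ideal containing `monomial u`. -/
lemma reach {K : Type*} [Field K] {n : ℕ} (J : Ideal (MvPolynomial (Fin n) K))
    (hB : IsBorelFixed J) :
    ∀ (N : ℕ) (u v : Fin n →₀ ℕ), (∑ k ∈ Finset.range n, (pf v k - pf u k)) ≤ N →
    monomial u (1 : K) ∈ J → (∀ k, pf u k ≤ pf v k) → pf u n = pf v n →
    monomial v (1 : K) ∈ J := by
  intro N
  induction N with
  | zero =>
    intro u v hm hu hle hdeg
    have heq : ∀ k, pf u k = pf v k := by
      intro k
      rcases le_or_gt n k with h | h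
      · rw [pf_stable u h, pf_stable v h, hdeg]
      · have := Finset.sum_eq_zero_iff.1 (Nat.le_zero.1 hm) k (Finset.mem_range.2 h)
        have := hle k
        omega
    have : u = v := by
      ext i
      have h1 := pf_succ u i.isLt
      have h2 := pf_succ v i.isLt
      have e1 := heq i
      have e2 := heq ((i : ℕ) + 1)
      simp only [Fin.eta] at h1 h2
      omega
    rw [← this]; exact hu
  | succ N ih =>
    intro u v hm hu hle hdeg
    by_cases hall : ∀ k, pf u k = pf v k
    · have : u = v := by
        ext i
        have h1 := pf_succ u i.isLt
        have h2 := pf_succ v i.isLt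
        have e1 := hall i
        have e2 := hall ((i : ℕ) + 1)
        simp only [Fin.eta] at h1 h2
        omega
      rw [← this]; exact hu
    · push_neg at hall
      have hex : ∃ k, pf u k < pf v k := by
        obtain ⟨k, hk⟩ := hall
        exact ⟨k, lt_of_le_of_ne (hle k) hk⟩
      set s' := Nat.find hex with hs'def
      have hs' : pf u s' < pf v s' := Nat.find_spec hex
      have hs'min : ∀ m < s', pf u m = pf v m := fun m hm' =>
        le_antisymm (hle m) (not_lt.1 (Nat.find_min hex hm'))
      have hs'pos : 0 < s' := by
        rcases Nat.eq_zero_or_pos s' with h | h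
        · rw [h] at hs'; rw [pf_zero, pf_zero] at hs'; omega
        · exact h
      have hs'n : s' < n := by
        by_contra hc
        push_neg at hc
        rw [pf_stable u hc, pf_stable v hc, hdeg] at hs'
        omega
      -- find minimal t' ≥ s' with positive exponent
      have hQex : ∃ k, s' ≤ k ∧ (if h : k < n then u ⟨k, h⟩ else 0) ≠ 0 := by
        by_contra hc
        push_neg at hc
        have : pf u n = pf u s' := by
          rw [pf, pf, Finset.range_eq_Ico,
            ← Finset.sum_Ico_consecutive _ (Nat.zero_le s') (le_of_lt hs'n), Finset.range_eq_Ico]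
          have : ∑ j ∈ Finset.Ico s' n, (if h : j < n then u ⟨j, h⟩ else 0) = 0 := by
            apply Finset.sum_eq_zero
            intro j hj
            exact hc j (Finset.mem_Ico.1 hj).1
          omega
        have h2 : pf v s' ≤ pf v n := pf_le_top v s'
        omega
      set t' := Nat.find hQex with ht'def
      obtain ⟨ht's', ht'pos⟩ := Nat.find_spec hQex
      have ht'n : t' < n := by
        by_contra hc
        push_neg at hc
        rw [dif_neg (by omega)] at ht'pos
        exact ht'pos rfl
      rw [dif_pos ht'n] at ht'pos
      set t : Fin n := ⟨t', ht'n⟩ with htdef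
      set s : Fin n := ⟨s' - 1, by omega⟩ with hsdef
      have hst : s < t := by
        rw [Fin.lt_def]; simp only [hsdef, htdef]; omega
      set u' := u - Finsupp.single t 1 + Finsupp.single s 1 with hu'def
      have hu'mem : monomial u' (1 : K) ∈ J := hB u hu t s hst ht'pos
      have hmove := pf_move u t s hst ht'pos
      have hsv : (s : ℕ) = s' - 1 := rfl
      have htv : (t : ℕ) = t' := rfl
      -- pf u' k values
      have hu'k : ∀ k, pf u' k = pf u k + (if s' ≤ k then 1 else 0) - (if t' < k then 1 else 0) := by
        intro k
        have hmv := hmove k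
        rw [← hu'def] at hmv
        rw [htv, hsv] at hmv
        split_ifs at hmv ⊢ <;> omega
      -- pf u stays constant on [s', t']
      have hflat : ∀ k, s' ≤ k → k ≤ t' → pf u k = pf u s' := by
        intro k hk1 hk2
        induction k with
        | zero => omega
        | succ k ihk =>
          rcases Nat.lt_or_ge k s' with h | h
          · have : s' = k + 1 := by omega
            rw [this]
          · have hkn : k < n := by omega
            rw [pf_succ u hkn]
            have hz : u ⟨k, hkn⟩ = 0 := by
              have := Nat.find_min hQex (m := k) (by omega)
              push_neg at this
              have h2 := this h
              rw [dif_pos hkn] at h2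
              omega
            rw [hz, ihk h (by omega), Nat.add_zero]
      have hle' : ∀ k, pf u' k ≤ pf v k := by
        intro k
        rw [hu'k k]
        rcases Nat.lt_or_ge k s' with h | h
        · simp only [if_neg (by omega : ¬ s' ≤ k)]
          have := hle k
          omega
        · rcases le_or_gt k t' with h2 | h2
          · rw [if_pos h, if_neg (by omega)]
            have hconst := hflat k h h2
            have : pf v s' ≤ pf v k := pf_mono v h
            omega
          · rw [if_pos h, if_pos h2]
            have := hle k
            omega
      have hge' : ∀ k, pf u k ≤ pf u' k := by
        intro k
        rw [hu'k k]
        split <;> split <;> omega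
      have hdeg' : pf u' n = pf v n := by
        rw [hu'k n, if_pos (by omega), if_pos (by omega)]
        omega
      have hmeas : (∑ k ∈ Finset.range n, (pf v k - pf u' k)) ≤ N := by
        have hlt : (∑ k ∈ Finset.range n, (pf v k - pf u' k))
            < ∑ k ∈ Finset.range n, (pf v k - pf u k) := by
          apply Finset.sum_lt_sum
          · intro k _
            have := hge' k
            omega
          · refine ⟨s', Finset.mem_range.2 hs'n, ?_⟩
            have h1 := hu'k s'
            rw [if_pos le_rfl, if_neg (by omega)] at h1
            omega
        omega
      exact ih u' v hmeas hu'mem hle' hdeg'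

/-- Main lower bound: every monomial dominating `u` lies in every Borel-fixed ideal
containing `monomial u`. -/
lemma mem_of_sSet {K : Type*} [Field K] {n : ℕ} (J : Ideal (MvPolynomial (Fin n) K))
    (hB : IsBorelFixed J) (u w : Fin n →₀ ℕ) (hu : monomial u (1 : K) ∈ J)
    (hw : w ∈ sSet u) : monomial w (1 : K) ∈ J := by
  set D := pf u n with hD
  set v : Fin n →₀ ℕ := Finsupp.equivFunOnFinite.symm
    (fun j : Fin n => min (pf w ((j : ℕ) + 1)) D - min (pf w (j : ℕ)) D) with hvdef
  have hvapp : ∀ j : Fin n, v j = min (pf w ((j : ℕ) + 1)) D - min (pf w (j : ℕ)) D := by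
    intro j; rw [hvdef]; rfl
  have hpv : ∀ k, pf v k = min (pf w k) D := by
    intro k
    induction k with
    | zero => rw [pf_zero, pf_zero]; simp
    | succ k ihk =>
      rcases Nat.lt_or_ge k n with h | h
      · rw [pf_succ v h, ihk, hvapp ⟨k, h⟩]
        have : pf w k ≤ pf w (k + 1) := pf_mono w (by omega)
        simp only []
        omega
      · rw [pf_succ_ge v h, pf_succ_ge w h, ihk]
  have hdegv : pf v n = D := by
    rw [hpv]
    have := hw n
    omega
  have hlev : ∀ k, pf u k ≤ pf v k := by
    intro k
    rw [hpv]
    have h1 := hw k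
    have h2 := pf_le_top u k
    omega
  have hvw : v ≤ w := by
    intro i
    rw [hvapp i]
    have := pf_succ w i.isLt
    simp only [Fin.eta] at this
    omega
  have hvmem : monomial v (1 : K) ∈ J :=
    reach J hB (∑ k ∈ Finset.range n, (pf v k - pf u k)) u v le_rfl hu hlev (by rw [hdegv])
  have : monomial (w - v) (1 : K) * monomial v (1 : K) = monomial w (1 : K) := by
    rw [monomial_mul, one_mul, tsub_add_cancel_of_le hvw]
  rw [← this]
  exact Ideal.mul_mem_left J _ hvmem

lemma bIdeal_isBorelFixed {K : Type*} [Field K] {n : ℕ} (u : Fin n →₀ ℕ) :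
    IsBorelFixed (bIdeal K u) := by
  intro w hw t s hst hwt
  rw [monomial_mem_bIdeal_iff] at hw ⊢
  intro k
  exact le_trans (hw k) (pf_move_ge w t s hst hwt k)

lemma borelClosure_eq_bIdeal {K : Type*} [Field K] {n : ℕ} (u : Fin n →₀ ℕ) :
    borelClosure (K := K) {u} = bIdeal K u := by
  apply le_antisymm
  · apply sInf_le
    refine ⟨⟨sSet u, rfl⟩, bIdeal_isBorelFixed u, ?_⟩
    intro u' hu'
    rw [Set.mem_singleton_iff] at hu'
    subst hu'
    exact monomial_mem_bIdeal_iff.2 (sSet_self _)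
  · apply le_sInf
    rintro J ⟨hmon, hbor, hu⟩
    rw [bIdeal, Ideal.span_le]
    rintro p ⟨w, hw, rfl⟩
    exact mem_of_sSet J hbor u w (hu u rfl) hw

lemma pf_MIN {n : ℕ} (a b : Fin n →₀ ℕ) (hdeg : pf a n = pf b n) (k : ℕ) :
    pf (MINexp a b) k = max (pf a k) (pf b k) := by
  set d := pf a n with hd
  have hmapp : ∀ j : Fin n, MINexp a b j
      = min (∑ x ∈ Finset.Ici j, a x) (∑ x ∈ Finset.Ici j, b x)
        - min (∑ x ∈ Finset.Ioi j, a x) (∑ x ∈ Finset.Ioi j, b x) := by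
    intro j; rw [MINexp]; rfl
  induction k with
  | zero => rw [pf_zero, pf_zero, pf_zero]; rfl
  | succ k ihk =>
    rcases Nat.lt_or_ge k n with h | h
    · rw [pf_succ _ h, ihk, hmapp ⟨k, h⟩]
      have ea := pf_add_Ici a ⟨k, h⟩
      have eb := pf_add_Ici b ⟨k, h⟩
      have ea' := pf_add_Ioi a ⟨k, h⟩
      have eb' := pf_add_Ioi b ⟨k, h⟩
      have ma : pf a k ≤ pf a (k+1) := pf_mono a (by omega)
      have mb : pf b k ≤ pf b (k+1) := pf_mono b (by omega)
      have la : pf a (k+1) ≤ pf a n := pf_le_top a _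
      have lb : pf b (k+1) ≤ pf b n := pf_le_top b _
      simp only [] at ea eb ea' eb' ⊢
      omega
    · rw [pf_succ_ge _ h, pf_succ_ge a h, pf_succ_ge b h, ihk]

lemma sSet_MIN {n : ℕ} (a b : Fin n →₀ ℕ) (hdeg : pf a n = pf b n) :
    sSet (MINexp a b) = sSet a ∩ sSet b := by
  ext w
  simp only [sSet, Set.mem_setOf_eq, Set.mem_inter_iff]
  constructor
  · intro h
    constructor <;> intro k <;> have := h k <;> rw [pf_MIN a b hdeg k] at this <;> omega
  · rintro ⟨h1, h2⟩ k
    rw [pf_MIN a b hdeg k]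
    exact max_le (h1 k) (h2 k)

theorem stmt8 {K : Type*} [Field K] (n d : ℕ) (a b : Fin n →₀ ℕ)
    (ha : a.sum (fun _ e => e) = d) (hb : b.sum (fun _ e => e) = d) :
    borelClosure (K := K) {a} ⊓ borelClosure (K := K) {b}
      = borelClosure (K := K) {MINexp a b} := by
  have hsum : ∀ u : Fin n →₀ ℕ, u.sum (fun _ e => e) = ∑ j, u j := by
    intro u
    rw [Finsupp.sum_fintype]
    intro _; rfl
  have hdeg : pf a n = pf b n := by
    rw [pf_top, pf_top, ← hsum, ← hsum, ha, hb]
  rw [borelClosure_eq_bIdeal, borelClosure_eq_bIdeal, borelClosure_eq_bIdeal]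
  apply le_antisymm
  · intro p hp
    rw [Submodule.mem_inf] at hp
    obtain ⟨hpa, hpb⟩ := hp
    unfold bIdeal at hpa hpb ⊢
    rw [mem_ideal_span_monomial_image] at hpa hpb ⊢
    intro xi hxi
    obtain ⟨sa, hsa, hsale⟩ := hpa xi hxi
    obtain ⟨sb, hsb, hsble⟩ := hpb xi hxi
    refine ⟨xi, ?_, le_rfl⟩
    rw [sSet_MIN a b hdeg]
    exact ⟨sSet_upward hsa hsale, sSet_upward hsb hsble⟩
  · apply le_inf
    · apply Ideal.span_mono
      apply Set.image_mono
      rw [sSet_MIN a b hdeg]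
      exact Set.inter_subset_left
    · apply Ideal.span_mono
      apply Set.image_mono
      rw [sSet_MIN a b hdeg]
      exact Set.inter_subset_right
end

section
/- Let $I=\langle\mathbf{m}_1,\dots,\mathbf{m}_s\rangle$ be the smallest Borel fixed ideal containing monomials $\mathbf{m}_1,\dots,\mathbf{m}_s$, all of the same degree $d$. Then for every $j<s$, $\langle\mathbf{m}_j\rangle\cap\langle\mathbf{m}_{j+1},\dots,\mathbf{m}_s\rangle=\sum_{k=j+1}^{s}\langle\mathbf{MIN}(\mathbf{m}_j,\mathbf{m}_k)\rangle$; in particular this intersection is a Borel fixed ideal generated in the Borel sense by at most $s-j$ monomials of degree $d$. -/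
open MvPolynomial

namespace BorelAux

variable {n : ℕ}

/-- tail sum: sum of `u j` over indices with value ≥ i -/
def T (u : Fin n →₀ ℕ) (i : ℕ) : ℕ :=
  ∑ j ∈ Finset.univ.filter (fun j : Fin n => i ≤ (j : ℕ)), u j

/-- head sum -/
def H (u : Fin n →₀ ℕ) (i : ℕ) : ℕ :=
  ∑ j ∈ Finset.univ.filter (fun j : Fin n => (j : ℕ) < i), u j

lemma H_add_T (u : Fin n →₀ ℕ) (i : ℕ) : H u i + T u i = T u 0 := by
  unfold H T
  have h1 : Finset.univ.filter (fun j : Fin n => 0 ≤ (j : ℕ)) = Finset.univ := by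
    ext j; simp
  rw [h1, ← Finset.sum_filter_add_sum_filter_not Finset.univ (fun j : Fin n => (j : ℕ) < i) u]
  congr 2
  ext j; simp [Nat.not_lt]

lemma T_zero (u : Fin n →₀ ℕ) : T u 0 = ∑ j : Fin n, u j := by
  unfold T; congr 1; ext j; simp

lemma T_of_ge (u : Fin n →₀ ℕ) {i : ℕ} (h : n ≤ i) : T u i = 0 := by
  unfold T
  rw [Finset.sum_eq_zero_iff]
  intro j hj
  simp only [Finset.mem_filter] at hj
  exact absurd (lt_of_lt_of_le j.isLt (le_trans h hj.2)) (lt_irrefl _)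

lemma T_succ_add (u : Fin n →₀ ℕ) {i : ℕ} (h : i < n) :
    T u i = u ⟨i, h⟩ + T u (i + 1) := by
  unfold T
  have : Finset.univ.filter (fun j : Fin n => i ≤ (j : ℕ))
      = insert ⟨i, h⟩ (Finset.univ.filter (fun j : Fin n => i + 1 ≤ (j : ℕ))) := by
    ext j; simp only [Finset.mem_filter, Finset.mem_insert, Finset.mem_univ, true_and]
    constructor
    · intro hj
      rcases eq_or_lt_of_le hj with h1 | h1
      · left; exact (Fin.ext h1.symm)
      · right; omega
    · rintro (rfl | hj)
      · simp
      · omega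
  rw [this, Finset.sum_insert]
  simp

lemma T_antitone (u : Fin n →₀ ℕ) : Antitone (T u) := by
  intro a b hab
  unfold T
  apply Finset.sum_le_sum_of_subset
  intro j hj
  simp only [Finset.mem_filter, Finset.mem_univ, true_and] at hj ⊢
  omega

lemma T_mono {u v : Fin n →₀ ℕ} (h : u ≤ v) (i : ℕ) : T u i ≤ T v i :=
  Finset.sum_le_sum (fun j _ => Finsupp.le_def.mp h j)

lemma H_mono_le {u v : Fin n →₀ ℕ} (h : u ≤ v) (i : ℕ) : H u i ≤ H v i :=
  Finset.sum_le_sum (fun j _ => Finsupp.le_def.mp h j)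

lemma H_succ (u : Fin n →₀ ℕ) {i : ℕ} (h : i < n) :
    H u (i + 1) = H u i + u ⟨i, h⟩ := by
  have h1 := H_add_T u i
  have h2 := H_add_T u (i+1)
  have h3 := T_succ_add u h
  omega

lemma H_zero (u : Fin n →₀ ℕ) : H u 0 = 0 := by
  unfold H; simp

lemma eq_of_T_eq {u v : Fin n →₀ ℕ} (h : ∀ i, T u i = T v i) : u = v := by
  ext j
  have h1 := T_succ_add u j.isLt
  have h2 := T_succ_add v j.isLt
  simp only [Fin.eta] at h1 h2
  have ha := h (j : ℕ); have hb := h ((j : ℕ) + 1)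
  omega


lemma move_apply (w : Fin n →₀ ℕ) (t s j : Fin n) :
    (w - Finsupp.single t 1 + Finsupp.single s 1 : Fin n →₀ ℕ) j
      = w j - (if t = j then 1 else 0) + (if s = j then 1 else 0) := by
  simp [Finsupp.add_apply, Finsupp.tsub_apply, Finsupp.single_apply]

lemma T_move (v : Fin n →₀ ℕ) (t s : Fin n) (hst : s < t) (hvt : v t ≠ 0) (i : ℕ) :
    T (v - Finsupp.single t 1 + Finsupp.single s 1) i + (if i ≤ (t : ℕ) then 1 else 0)
      = T v i + (if i ≤ (s : ℕ) then 1 else 0) := by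
  classical
  unfold T
  have hmemt : (if i ≤ (t : ℕ) then (1:ℕ) else 0)
      = ∑ j ∈ Finset.univ.filter (fun j : Fin n => i ≤ (j : ℕ)), (if t = j then 1 else 0) := by
    rw [Finset.sum_ite_eq]
    congr 1
    simp
  have hmems : (if i ≤ (s : ℕ) then (1:ℕ) else 0)
      = ∑ j ∈ Finset.univ.filter (fun j : Fin n => i ≤ (j : ℕ)), (if s = j then 1 else 0) := by
    rw [Finset.sum_ite_eq]
    congr 1
    simp
  rw [hmemt, hmems, ← Finset.sum_add_distrib, ← Finset.sum_add_distrib]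
  refine Finset.sum_congr rfl fun j _ => ?_
  rw [move_apply]
  rcases eq_or_ne t j with rfl | h1
  · have h2 : s ≠ t := ne_of_lt hst
    simp only [if_pos rfl, if_neg h2, if_true]
    omega
  · simp only [if_neg h1]
    omega

/-- v is "below u" in the Borel order: same degree, smaller tail sums -/
def Bor (u v : Fin n →₀ ℕ) : Prop := T v 0 = T u 0 ∧ ∀ i, T v i ≤ T u i

lemma Bor.refl (u : Fin n →₀ ℕ) : Bor u u := ⟨rfl, fun _ => le_rfl⟩

def GenSet (S : Set (Fin n →₀ ℕ)) : Set (Fin n →₀ ℕ) :=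
  {w | ∃ u ∈ S, ∃ v, Bor u v ∧ v ≤ w}

variable {K : Type*} [Field K]

lemma mem_span_gen (S : Set (Fin n →₀ ℕ)) (p : MvPolynomial (Fin n) K) :
    p ∈ Ideal.span ((fun u => monomial u (1 : K)) '' GenSet S)
      ↔ ∀ xi ∈ p.support, xi ∈ GenSet S := by
  rw [mem_ideal_span_monomial_image]
  constructor
  · intro h xi hxi
    obtain ⟨si, ⟨u, hu, v, hbv, hvs⟩, hsx⟩ := h xi hxi
    exact ⟨u, hu, v, hbv, le_trans hvs hsx⟩
  · exact fun h xi hxi => ⟨xi, h xi hxi, le_rfl⟩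

lemma monomial_mem_span_gen (S : Set (Fin n →₀ ℕ)) (w : Fin n →₀ ℕ) :
    monomial w (1 : K) ∈ Ideal.span ((fun u => monomial u (1 : K)) '' GenSet S)
      ↔ w ∈ GenSet S := by
  classical
  rw [mem_span_gen, support_monomial]
  simp

lemma reach {J : Ideal (MvPolynomial (Fin n) K)} (hJ : IsBorelFixed J) :
    ∀ D : ℕ, ∀ u v : Fin n →₀ ℕ, Bor u v →
      (∑ i ∈ Finset.range n, (T u i - T v i)) ≤ D →
      monomial u (1 : K) ∈ J → monomial v (1 : K) ∈ J := by
  intro D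
  induction D with
  | zero =>
    intro u v hb hle hu
    have : u = v := by
      apply eq_of_T_eq
      intro i
      rcases lt_or_ge i n with hi | hi
      · have h1 : T u i - T v i = 0 := by
          have h2 := Finset.single_le_sum
            (f := fun i => T u i - T v i) (fun i _ => Nat.zero_le _)
            (Finset.mem_range.mpr hi)
          omega
        have := hb.2 i
        omega
      · rw [T_of_ge u hi, T_of_ge v hi]
    exact this ▸ hu
  | succ D ih =>
    intro u v hb hle hu
    by_cases hall : ∀ i, T u i = T v i
    · exact (eq_of_T_eq hall) ▸ hu
    · push_neg at hall
      obtain ⟨i0, hi0⟩ := hall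
      have hi0' : T v i0 < T u i0 := lt_of_le_of_ne (hb.2 i0) fun h => hi0 h.symm
      have hi0n : i0 < n := by
        by_contra h
        push_neg at h
        rw [T_of_ge u h, T_of_ge v h] at hi0'
        omega
      classical
      set t' := Nat.findGreatest (fun i => T v i < T u i) n with ht'def
      have hPt' : T v t' < T u t' := by
        have h := Nat.findGreatest_spec (P := fun i => T v i < T u i)
          (le_of_lt hi0n) hi0'
        rw [← ht'def] at h
        exact h
      have ht'n : t' < n := by
        rcases lt_or_ge t' n with h | h
        · exact h
        · rw [T_of_ge u h, T_of_ge v h] at hPt'; omega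
      have htail : ∀ i, t' < i → T u i = T v i := by
        intro i hi
        rcases le_or_gt i n with hin | hin
        · have h1 := Nat.findGreatest_is_greatest (P := fun i => T v i < T u i)
            (by rw [← ht'def]; exact hi) hin
          have := hb.2 i
          omega
        · rw [T_of_ge u (le_of_lt hin), T_of_ge v (le_of_lt hin)]
      set s' := Nat.findGreatest (fun i => T u i = T v i) t' with hs'def
      have hQs' : T u s' = T v s' := by
        have h := Nat.findGreatest_spec (P := fun i => T u i = T v i)
          (Nat.zero_le t') hb.1.symm
        rw [← hs'def] at h
        exact h
      have hs'le : s' ≤ t' := by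
        have h := Nat.findGreatest_le (P := fun i => T u i = T v i) t'
        rw [← hs'def] at h
        exact h
      have hs'lt : s' < t' := lt_of_le_of_ne hs'le (by
        intro h; rw [h] at hQs'; omega)
      have hstrict : ∀ i, s' < i → i ≤ t' → T v i < T u i := by
        intro i h1 h2
        have h3 := Nat.findGreatest_is_greatest (P := fun i => T u i = T v i)
          (by rw [← hs'def]; exact h1) h2
        have := hb.2 i
        omega
      set tF : Fin n := ⟨t', ht'n⟩ with htF
      set sF : Fin n := ⟨s', lt_trans hs'lt ht'n⟩ with hsF
      have hutF : u tF ≠ 0 := by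
        have h1 := T_succ_add u ht'n
        have h2 := T_succ_add v ht'n
        have h3 := htail (t' + 1) (Nat.lt_succ_self t')
        simp only [htF]
        omega
      have hstF : sF < tF := by
        simp only [Fin.mk_lt_mk, hsF, htF]
        exact hs'lt
      set u'' := u - Finsupp.single tF 1 + Finsupp.single sF 1 with hu''def
      have hu'' : monomial u'' (1 : K) ∈ J := hJ u hu tF sF hstF hutF
      have hTmove := T_move u tF sF hstF hutF
      simp only [← hu''def] at hTmove
      have hTm2 : ∀ i : ℕ, T u'' i + (if i ≤ t' then 1 else 0)
          = T u i + (if i ≤ s' then 1 else 0) := fun i => hTmove i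
      have hb'' : Bor u'' v := by
        constructor
        · have h0' := hTm2 0
          have h1 := hb.1
          rw [if_pos (Nat.zero_le _), if_pos (Nat.zero_le _)] at h0'
          omega
        · intro i
          have h1 := hTm2 i
          have h2 := hb.2 i
          rcases le_or_gt i s' with h3 | h3
          · have h4 : i ≤ t' := le_trans h3 (le_of_lt hs'lt)
            simp only [if_pos h3, if_pos h4] at h1
            omega
          · rcases le_or_gt i t' with h4 | h4
            · have h5 := hstrict i h3 h4
              simp only [if_pos h4, if_neg (not_le.mpr h3)] at h1
              omega
            · have h5 := htail i h4
              simp only [if_neg (not_le.mpr h3), if_neg (not_le.mpr h4)] at h1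
              omega
      apply ih u'' v hb'' ?_ hu''
      have hlt : (∑ i ∈ Finset.range n, (T u'' i - T v i))
          < ∑ i ∈ Finset.range n, (T u i - T v i) := by
        apply Finset.sum_lt_sum
        · intro i _
          have h1 := hTm2 i
          have h2 := hb.2 i
          split_ifs at h1 <;> omega
        · refine ⟨t', Finset.mem_range.mpr ht'n, ?_⟩
          have h1 := hTm2 t'
          rw [if_pos (le_refl t'), if_neg (not_le.mpr hs'lt)] at h1
          omega
      omega

theorem borelClosure_eq_span_gen (S : Set (Fin n →₀ ℕ)) :
    borelClosure (K := K) S = Ideal.span ((fun u => monomial u (1 : K)) '' GenSet S) := by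
  apply le_antisymm
  · apply sInf_le
    refine ⟨⟨GenSet S, rfl⟩, ?_, ?_⟩
    · -- Borel fixed
      intro w hw t s hst hwt
      rw [monomial_mem_span_gen] at hw ⊢
      obtain ⟨u, hu, v, hbv, hvw⟩ := hw
      rcases eq_or_ne (v t) (w t) with hvt | hvt
      · -- move v as well
        refine ⟨u, hu, v - Finsupp.single t 1 + Finsupp.single s 1, ?_, ?_⟩
        · have hvt0 : v t ≠ 0 := by rw [hvt]; exact hwt
          have hTm := T_move v t s hst hvt0
          constructor
          · have := hTm 0
            have h0 := hbv.1
            simp only [Nat.zero_le, if_pos] at this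
            omega
          · intro i
            have h1 := hTm i
            have h2 := hbv.2 i
            have h3 : (s : ℕ) < (t : ℕ) := hst
            split_ifs at h1 <;> omega
        · rw [Finsupp.le_def]
          intro j
          rw [move_apply, move_apply]
          have h1 := Finsupp.le_def.mp hvw j
          have h2 : v t ≠ 0 := by rw [hvt]; exact hwt
          rcases eq_or_ne t j with rfl | h3
          · simp only [if_pos rfl, if_neg (ne_of_lt hst : s ≠ t), if_true]
            omega
          · simp only [if_neg h3]
            omega
      · -- v t < w t, keep v
        refine ⟨u, hu, v, hbv, ?_⟩
        rw [Finsupp.le_def]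
        intro j
        rw [move_apply]
        have h1 := Finsupp.le_def.mp hvw j
        have h2 := Finsupp.le_def.mp hvw t
        rcases eq_or_ne t j with rfl | h3
        · simp only [if_pos rfl, if_neg (ne_of_lt hst : s ≠ t), if_true]
          omega
        · simp only [if_neg h3]
          omega
    · intro u hu
      rw [monomial_mem_span_gen]
      exact ⟨u, hu, u, Bor.refl u, le_rfl⟩
  · rw [Ideal.span_le]
    rintro p ⟨w, hw, rfl⟩
    rw [SetLike.mem_coe, borelClosure, Submodule.mem_sInf]
    rintro J ⟨hmono, hbf, hcont⟩
    obtain ⟨u, hu, v, hbv, hvw⟩ := hw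
    have hv : monomial v (1 : K) ∈ J :=
      reach hbf _ u v hbv le_rfl (hcont u hu)
    have hw' : monomial w (1 : K) = monomial (w - v) (1 : K) * monomial v (1 : K) := by
      rw [monomial_mul, one_mul, tsub_add_cancel_of_le hvw]
    show monomial w (1 : K) ∈ J
    rw [hw']
    exact Ideal.mul_mem_left J _ hv

end BorelAux

namespace BorelAux

variable {n : ℕ}

lemma sum_Ici (a : Fin n →₀ ℕ) (i : Fin n) :
    ∑ j ∈ Finset.Ici i, a j = T a (i : ℕ) := by
  unfold T
  congr 1
  ext j
  simp only [Finset.mem_Ici, Finset.mem_filter, Finset.mem_univ, true_and, Fin.le_def]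

lemma sum_Ioi (a : Fin n →₀ ℕ) (i : Fin n) :
    ∑ j ∈ Finset.Ioi i, a j = T a ((i : ℕ) + 1) := by
  unfold T
  congr 1
  ext j
  simp only [Finset.mem_Ioi, Finset.mem_filter, Finset.mem_univ, true_and, Fin.lt_def]
  omega

lemma MINexp_apply (a b : Fin n →₀ ℕ) (j : Fin n) :
    MINexp a b j = min (T a (j : ℕ)) (T b (j : ℕ))
      - min (T a ((j : ℕ) + 1)) (T b ((j : ℕ) + 1)) := by
  show (Finsupp.equivFunOnFinite.symm _) j = _
  rw [Finsupp.coe_equivFunOnFinite_symm]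
  rw [sum_Ici, sum_Ici, sum_Ioi, sum_Ioi]

lemma T_MIN (a b : Fin n →₀ ℕ) (i : ℕ) :
    T (MINexp a b) i = min (T a i) (T b i) := by
  have key : ∀ e i, n ≤ i + e → T (MINexp a b) i = min (T a i) (T b i) := by
    intro e
    induction e with
    | zero =>
      intro i hi
      simp only [Nat.add_zero] at hi
      rw [T_of_ge _ hi, T_of_ge _ hi, T_of_ge _ hi]
      simp
    | succ e ih =>
      intro i hi
      rcases le_or_gt n i with h | h
      · rw [T_of_ge _ h, T_of_ge _ h, T_of_ge _ h]
        simp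
      · have h1 := T_succ_add (MINexp a b) h
        have h2 := T_succ_add a h
        have h3 := T_succ_add b h
        have h4 := ih (i + 1) (by omega)
        have h5 := MINexp_apply a b ⟨i, h⟩
        simp only [Fin.val_mk] at h5
        omega
  exact key n i (by omega)

lemma Bor_MIN_left {a b v : Fin n →₀ ℕ} (hd : T a 0 = T b 0)
    (h : Bor (MINexp a b) v) : Bor a v := by
  constructor
  · rw [h.1, T_MIN]; omega
  · intro i
    have := h.2 i
    rw [T_MIN] at this
    omega

lemma Bor_MIN_right {a b v : Fin n →₀ ℕ} (hd : T a 0 = T b 0)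
    (h : Bor (MINexp a b) v) : Bor b v := by
  constructor
  · rw [h.1, T_MIN]; omega
  · intro i
    have := h.2 i
    rw [T_MIN] at this
    omega

lemma gen_inter {u u' w : Fin n →₀ ℕ} (hd : T u 0 = T u' 0)
    (h1 : ∃ v, Bor u v ∧ v ≤ w) (h2 : ∃ v, Bor u' v ∧ v ≤ w) :
    ∃ v, Bor (MINexp u u') v ∧ v ≤ w := by
  obtain ⟨v1, hb1, hv1⟩ := h1
  obtain ⟨v2, hb2, hv2⟩ := h2
  set d := T u 0 with hdd
  set v : Fin n →₀ ℕ := Finsupp.equivFunOnFinite.symm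
    (fun j : Fin n => min d (H w ((j : ℕ) + 1)) - min d (H w (j : ℕ))) with hvdef
  have hvapp : ∀ j : Fin n, v j = min d (H w ((j : ℕ) + 1)) - min d (H w (j : ℕ)) := by
    intro j
    rw [hvdef]
    exact congrFun (Finsupp.coe_equivFunOnFinite_symm _) j
  have hHmono : ∀ i, i < n → H w i ≤ H w (i + 1) := by
    intro i hi
    rw [H_succ w hi]
    omega
  have hHv : ∀ i, i ≤ n → H v i = min d (H w i) := by
    intro i
    induction i with
    | zero =>
      intro _
      rw [H_zero, H_zero]
      omega
    | succ i ih =>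
      intro hin
      have hi : i < n := hin
      rw [H_succ v hi, ih (le_of_lt hi), hvapp ⟨i, hi⟩]
      simp only [Fin.val_mk]
      have := hHmono i hi
      omega
  -- total degree of w is at least d
  have hTw : d ≤ T w 0 := by
    have ha := T_mono hv1 0
    have hb := hb1.1
    omega
  have hHwn : H w n = T w 0 := by
    have := H_add_T w n
    have := T_of_ge w (le_refl n)
    omega
  have hTv0 : T v 0 = d := by
    have ha := H_add_T v n
    have hb := T_of_ge v (le_refl n)
    have hc := hHv n (le_refl n)
    omega
  refine ⟨v, ⟨?_, ?_⟩, ?_⟩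
  · rw [T_MIN, hTv0]
    omega
  · intro i
    rw [T_MIN]
    rcases le_or_gt i n with hin | hin
    · have ha := H_add_T v i
      have hc := hHv i hin
      -- bounds from v1 and v2
      have hd1 : H v1 i ≤ H w i := H_mono_le hv1 i
      have hd2 : H v2 i ≤ H w i := H_mono_le hv2 i
      have he1 := H_add_T v1 i
      have he2 := H_add_T v2 i
      have hf1 := hb1.2 i
      have hf2 := hb2.2 i
      have hg1 := hb1.1
      have hg2 := hb2.1
      omega
    · rw [T_of_ge v (le_of_lt hin)]
      omega
  · rw [Finsupp.le_def]
    intro j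
    rw [hvapp j]
    have := H_succ w j.isLt
    simp only [Fin.eta] at this
    omega

end BorelAux

namespace BorelAux

lemma ideal_sum_le {R : Type*} [CommRing R] {α : Type*} [DecidableEq α]
    (F : Finset α) (f : α → Ideal R) (J : Ideal R)
    (h : ∀ k ∈ F, f k ≤ J) : (∑ k ∈ F, f k) ≤ J := by
  induction F using Finset.induction with
  | empty => simp
  | insert _ _ hk ih =>
    rename_i a F'
    rw [Finset.sum_insert hk, Submodule.add_eq_sup]
    exact sup_le (h a (Finset.mem_insert_self a F'))
      (ih fun k hk' => h k (Finset.mem_insert_of_mem hk'))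

lemma ideal_le_sum {R : Type*} [CommRing R] {α : Type*} [DecidableEq α]
    (F : Finset α) (f : α → Ideal R) {k : α} (hk : k ∈ F) :
    f k ≤ ∑ x ∈ F, f x := by
  rw [← Finset.add_sum_erase F f hk, Submodule.add_eq_sup]
  exact le_sup_left

lemma GenSet_mono {n : ℕ} {S S' : Set (Fin n →₀ ℕ)} (h : S ⊆ S') :
    GenSet S ⊆ GenSet S' := by
  rintro w ⟨u, hu, v, hbv, hvw⟩
  exact ⟨u, h hu, v, hbv, hvw⟩

end BorelAux

open BorelAux in
theorem stmt10 {K : Type*} [Field K] (n s d : ℕ) (m : Fin s → (Fin n →₀ ℕ))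
    (hdeg : ∀ k, (m k).sum (fun _ e => e) = d) (j : Fin s) :
    borelClosure (K := K) {m j} ⊓ borelClosure (K := K) {u | ∃ k, j < k ∧ u = m k}
      = ∑ k ∈ Finset.Ioi j, borelClosure (K := K) {MINexp (m j) (m k)} := by
  classical
  have hdeg' : ∀ k, T (m k) 0 = d := by
    intro k
    rw [T_zero, ← hdeg k]
    rw [Finsupp.sum_fintype]
    intro _
    rfl
  set S3 : Set (Fin n →₀ ℕ) := {u | ∃ k, j < k ∧ u = MINexp (m j) (m k)} with hS3
  have hL : borelClosure (K := K) {m j} ⊓ borelClosure (K := K) {u | ∃ k, j < k ∧ u = m k}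
      = borelClosure (K := K) S3 := by
    rw [borelClosure_eq_span_gen, borelClosure_eq_span_gen, borelClosure_eq_span_gen]
    ext p
    rw [Submodule.mem_inf, mem_span_gen, mem_span_gen, mem_span_gen]
    constructor
    · rintro ⟨hA, hB⟩ xi hxi
      obtain ⟨u1, hu1, v1, hb1, hv1⟩ := hA xi hxi
      obtain ⟨u2, ⟨k, hk, rfl⟩, v2, hb2, hv2⟩ := hB xi hxi
      have hu1' : u1 = m j := hu1
      subst hu1'
      have hd : T (m j) 0 = T (m k) 0 := by rw [hdeg', hdeg']
      obtain ⟨v, hbv, hvw⟩ := gen_inter hd ⟨v1, hb1, hv1⟩ ⟨v2, hb2, hv2⟩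
      exact ⟨MINexp (m j) (m k), ⟨k, hk, rfl⟩, v, hbv, hvw⟩
    · intro h
      constructor
      · rintro xi hxi
        obtain ⟨u0, ⟨k, hk, rfl⟩, v, hbv, hvw⟩ := h xi hxi
        have hd : T (m j) 0 = T (m k) 0 := by rw [hdeg', hdeg']
        exact ⟨m j, rfl, v, Bor_MIN_left hd hbv, hvw⟩
      · rintro xi hxi
        obtain ⟨u0, ⟨k, hk, rfl⟩, v, hbv, hvw⟩ := h xi hxi
        have hd : T (m j) 0 = T (m k) 0 := by rw [hdeg', hdeg']
        exact ⟨m k, ⟨k, hk, rfl⟩, v, Bor_MIN_right hd hbv, hvw⟩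
  have hR : (∑ k ∈ Finset.Ioi j, borelClosure (K := K) {MINexp (m j) (m k)})
      = borelClosure (K := K) S3 := by
    apply le_antisymm
    · apply ideal_sum_le
      intro k hk
      rw [borelClosure_eq_span_gen, borelClosure_eq_span_gen]
      apply Ideal.span_mono
      apply Set.image_mono
      apply GenSet_mono
      rintro u rfl
      exact ⟨k, Finset.mem_Ioi.mp hk, rfl⟩
    · rw [borelClosure_eq_span_gen, Ideal.span_le]
      rintro p ⟨w, ⟨u0, ⟨k, hk, rfl⟩, v, hbv, hvw⟩, rfl⟩
      have hmem : monomial w (1 : K) ∈ borelClosure (K := K) {MINexp (m j) (m k)} := by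
        rw [borelClosure_eq_span_gen, monomial_mem_span_gen]
        exact ⟨MINexp (m j) (m k), rfl, v, hbv, hvw⟩
      exact ideal_le_sum (Finset.Ioi j)
        (fun k => borelClosure (K := K) {MINexp (m j) (m k)})
        (Finset.mem_Ioi.mpr hk) hmem
  rw [hL, hR]
end

section
/- Let $\mathbf{m}_1=x_1^{a_1}\cdots x_n^{a_n}$, $\mathbf{m}_2=x_1^{b_1}\cdots x_n^{b_n}$ be monomials of the same degree $d$. Then a monomial $x_1^{c_1}\cdots x_n^{c_n}$ of degree $d$ belongs to $\langle\mathbf{m}_1\rangle$ if and only if $c_i+c_{i+1}+\cdots+c_n\leq a_i+a_{i+1}+\cdots+a_n$ for all $i=1,\dots,n$. -/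
open MvPolynomial

namespace Stmt11Aux

open Finset

variable {n : ℕ}

/-- tail sum from natural index `k`. -/
def Tl (k : ℕ) (u : Fin n →₀ ℕ) : ℕ :=
  ∑ j ∈ univ.filter (fun j : Fin n => k ≤ (j : ℕ)), u j

lemma Tl_zero (u : Fin n →₀ ℕ) : Tl 0 u = ∑ j, u j := by
  simp [Tl]

lemma Tl_of_le {k : ℕ} (h : n ≤ k) (u : Fin n →₀ ℕ) : Tl k u = 0 := by
  unfold Tl
  rw [Finset.filter_false_of_mem, Finset.sum_empty]
  intro j _
  have := j.isLt
  omega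

lemma Tl_succ {k : ℕ} (h : k < n) (u : Fin n →₀ ℕ) :
    Tl k u = u ⟨k, h⟩ + Tl (k + 1) u := by
  unfold Tl
  have hset : (univ.filter (fun j : Fin n => k ≤ (j : ℕ)))
      = insert (⟨k, h⟩ : Fin n) (univ.filter (fun j : Fin n => k + 1 ≤ (j : ℕ))) := by
    ext j
    simp [Fin.ext_iff]
    omega
  rw [hset, Finset.sum_insert (by simp)]

lemma sum_single_apply (x : Fin n) (F : Finset (Fin n)) :
    ∑ j ∈ F, (Finsupp.single x 1 : Fin n →₀ ℕ) j = if x ∈ F then 1 else 0 := by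
  simp [Finsupp.single_apply]

lemma move_eq (u : Fin n →₀ ℕ) (t s : Fin n) (ht : u t ≠ 0) :
    (u - Finsupp.single t 1 + Finsupp.single s 1) + Finsupp.single t 1
      = u + Finsupp.single s 1 := by
  ext j
  simp only [Finsupp.add_apply, Finsupp.tsub_apply, Finsupp.single_apply]
  rcases eq_or_ne t j with rfl | hj
  · simp; omega
  · simp [hj]

lemma sum_move (u : Fin n →₀ ℕ) (t s : Fin n) (ht : u t ≠ 0) (F : Finset (Fin n)) :
    (∑ j ∈ F, ((u - Finsupp.single t 1 + Finsupp.single s 1 : Fin n →₀ ℕ)) j)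
        + (if t ∈ F then 1 else 0)
      = (∑ j ∈ F, u j) + (if s ∈ F then 1 else 0) := by
  have h := congrArg (fun v : Fin n →₀ ℕ => ∑ j ∈ F, v j) (move_eq u t s ht)
  simpa [Finsupp.add_apply, Finset.sum_add_distrib, sum_single_apply] using h

lemma Tl_move (u : Fin n →₀ ℕ) (t s : Fin n) (ht : u t ≠ 0) (k : ℕ) :
    Tl k (u - Finsupp.single t 1 + Finsupp.single s 1)
        + (if k ≤ (t : ℕ) then 1 else 0)
      = Tl k u + (if k ≤ (s : ℕ) then 1 else 0) := by
  have h := sum_move u t s ht (univ.filter (fun j : Fin n => k ≤ (j : ℕ)))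
  simp only [Finset.mem_filter, Finset.mem_univ, true_and] at h
  unfold Tl
  exact h

lemma eq_of_tl_eq (a c : Fin n →₀ ℕ) (h : ∀ k, Tl k a = Tl k c) : a = c := by
  ext j
  have ha := Tl_succ j.isLt a
  have hc := Tl_succ j.isLt c
  have h1 := h (j : ℕ)
  have h2 := h ((j : ℕ) + 1)
  rw [Fin.eta] at ha hc
  omega

lemma Ici_sum (i : Fin n) (u : Fin n →₀ ℕ) :
    ∑ j ∈ Finset.Ici i, u j = Tl (i : ℕ) u := by
  unfold Tl
  apply Finset.sum_congr _ (fun _ _ => rfl)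
  ext j
  simp only [Finset.mem_Ici, Finset.mem_filter, Finset.mem_univ, true_and, Fin.le_def]

section Back

variable {K : Type*} [Field K]

lemma back (J : Ideal (MvPolynomial (Fin n) K)) (hJ : IsBorelFixed J) (c : Fin n →₀ ℕ) :
    ∀ M : ℕ, ∀ a : Fin n →₀ ℕ, (∑ j, a j = ∑ j, c j) → (∀ k, Tl k c ≤ Tl k a) →
      (∑ k ∈ Finset.range n, (Tl k a - Tl k c)) ≤ M →
      monomial a (1 : K) ∈ J → monomial c (1 : K) ∈ J := by
  have base : ∀ a : Fin n →₀ ℕ, (∀ k, Tl k c ≤ Tl k a) →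
      (∑ k ∈ Finset.range n, (Tl k a - Tl k c)) = 0 →
      monomial a (1 : K) ∈ J → monomial c (1 : K) ∈ J := by
    intro a htail hm hmem
    have : a = c := by
      apply eq_of_tl_eq
      intro k
      by_cases hk : k < n
      · have := Finset.sum_eq_zero_iff.mp hm k (Finset.mem_range.mpr hk)
        have := htail k
        omega
      · rw [Tl_of_le (by omega), Tl_of_le (by omega)]
    exact this ▸ hmem
  intro M
  induction M with
  | zero =>
    intro a hsum htail hm hmem
    exact base a htail (by omega) hmem
  | succ M ih =>
    intro a hsum htail hm hmem
    by_cases h0 : (∑ k ∈ Finset.range n, (Tl k a - Tl k c)) = 0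
    · exact base a htail h0 hmem
    · obtain ⟨k0, hk0r, hk0⟩ := Finset.exists_ne_zero_of_sum_ne_zero h0
      set F : Finset ℕ := (Finset.range n).filter (fun k => Tl k c < Tl k a) with hF
      have hFne : F.Nonempty := ⟨k0, by
        simp only [hF, Finset.mem_filter]
        exact ⟨hk0r, by have := htail k0; omega⟩⟩
      obtain ⟨t, htdef⟩ : ∃ t, F.max' hFne = t := ⟨_, rfl⟩
      have htmem : t ∈ F := htdef ▸ F.max'_mem hFne
      have htmem' : t ∈ Finset.range n ∧ Tl t c < Tl t a := Finset.mem_filter.mp htmem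
      have htn : t < n := Finset.mem_range.mp htmem'.1
      have htlt : Tl t c < Tl t a := htmem'.2
      have htmax : ∀ k, t < k → Tl k a = Tl k c := by
        intro k hk
        by_cases hkn : k < n
        · have hknot : k ∉ F := by
            intro hkF
            have hle : k ≤ t := htdef ▸ F.le_max' k hkF
            omega
          have hnlt : ¬ Tl k c < Tl k a := fun hlt =>
            hknot (Finset.mem_filter.mpr ⟨Finset.mem_range.mpr hkn, hlt⟩)
          have := htail k
          omega
        · rw [Tl_of_le (by omega), Tl_of_le (by omega)]
      have ht0 : t ≠ 0 := by
        intro h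
        rw [h, Tl_zero, Tl_zero] at htlt
        omega
      have hs : t - 1 < n := by omega
      set tf : Fin n := ⟨t, htn⟩ with htf
      set sf : Fin n := ⟨t - 1, hs⟩ with hsf
      have hat : c tf < a tf := by
        have ha2 := Tl_succ htn a
        have hc2 := Tl_succ htn c
        have h3 := htmax (t + 1) (by omega)
        rw [← htf] at ha2 hc2
        omega
      have hmem' := hJ a hmem tf sf (by simp [htf, hsf, Fin.lt_def]; omega) (by omega)
      set a' := a - Finsupp.single tf 1 + Finsupp.single sf 1 with ha'
      have hTl : ∀ k, Tl k a' + (if k ≤ t then 1 else 0)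
          = Tl k a + (if k ≤ t - 1 then 1 else 0) := by
        intro k
        exact Tl_move a tf sf (by omega) k
      have hsum' : ∑ j, a' j = ∑ j, c j := by
        have h1 := hTl 0
        rw [Tl_zero, Tl_zero, if_pos (Nat.zero_le _), if_pos (Nat.zero_le _)] at h1
        omega
      have htail' : ∀ k, Tl k c ≤ Tl k a' := by
        intro k
        have h1 := hTl k
        have h2 := htail k
        by_cases hk : k ≤ t - 1
        · rw [if_pos (by omega), if_pos hk] at h1; omega
        · by_cases hk2 : k ≤ t
          · have hkt : k = t := by omega
            subst hkt
            rw [if_pos (by omega), if_neg hk] at h1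
            omega
          · rw [if_neg hk2, if_neg hk] at h1
            have h3 := htmax k (by omega)
            omega
      have hm' : (∑ k ∈ Finset.range n, (Tl k a' - Tl k c)) ≤ M := by
        have htr : t ∈ Finset.range n := Finset.mem_range.mpr htn
        have e1 : (Tl t a - Tl t c) + ∑ k ∈ (Finset.range n).erase t, (Tl k a - Tl k c)
            = ∑ k ∈ Finset.range n, (Tl k a - Tl k c) :=
          Finset.add_sum_erase (Finset.range n) (fun k => Tl k a - Tl k c) htr
        have e2 : (Tl t a' - Tl t c) + ∑ k ∈ (Finset.range n).erase t, (Tl k a' - Tl k c)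
            = ∑ k ∈ Finset.range n, (Tl k a' - Tl k c) :=
          Finset.add_sum_erase (Finset.range n) (fun k => Tl k a' - Tl k c) htr
        have hcongr : ∑ k ∈ (Finset.range n).erase t, (Tl k a' - Tl k c)
            = ∑ k ∈ (Finset.range n).erase t, (Tl k a - Tl k c) := by
          apply Finset.sum_congr rfl
          intro k hk
          have hk' : k ≠ t := (Finset.mem_erase.mp hk).1
          have h1 := hTl k
          by_cases hkle : k ≤ t - 1
          · rw [if_pos (by omega), if_pos hkle] at h1; omega
          · rw [if_neg (by omega), if_neg hkle] at h1; omega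
        have h1 := hTl t
        rw [if_pos le_rfl, if_neg (by omega)] at h1
        omega
      exact ih a' hsum' htail' hm' hmem'

/-- The set generating the ideal used for the forward direction. -/
def goodSet (a : Fin n →₀ ℕ) (d : ℕ) : Set (Fin n →₀ ℕ) :=
  {u | d ≤ ∑ j, u j ∧ ∀ k, Tl k u + d ≤ Tl k a + ∑ j, u j}

lemma goodSet_up {a : Fin n →₀ ℕ} {d : ℕ} {u v : Fin n →₀ ℕ} (huv : u ≤ v)
    (hu : u ∈ goodSet a d) : v ∈ goodSet a d := by
  have hpt : ∀ j, u j ≤ v j := fun j => Finsupp.le_def.mp huv j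
  have hsum : ∑ j, u j ≤ ∑ j, v j := Finset.sum_le_sum (fun j _ => hpt j)
  refine ⟨le_trans hu.1 hsum, fun k => ?_⟩
  have key : Tl k v + ∑ j, u j ≤ Tl k u + ∑ j, v j := by
    have hu1 := Finset.sum_filter_add_sum_filter_not univ (fun j : Fin n => k ≤ (j : ℕ)) u
    have hv1 := Finset.sum_filter_add_sum_filter_not univ (fun j : Fin n => k ≤ (j : ℕ)) v
    have hle : ∑ j ∈ univ.filter (fun j : Fin n => ¬ k ≤ (j : ℕ)), u j
        ≤ ∑ j ∈ univ.filter (fun j : Fin n => ¬ k ≤ (j : ℕ)), v j :=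
      Finset.sum_le_sum (fun j _ => hpt j)
    unfold Tl
    omega
  have h2 := hu.2 k
  omega

lemma mem_span_goodSet {K : Type*} [Field K] {a : Fin n →₀ ℕ} {d : ℕ} (u : Fin n →₀ ℕ) :
    monomial u (1 : K) ∈ Ideal.span ((fun w => monomial w (1 : K)) '' goodSet a d)
      ↔ u ∈ goodSet a d := by
  rw [mem_ideal_span_monomial_image]
  constructor
  · intro h
    obtain ⟨s, hs, hsu⟩ := h u (by simp [support_monomial])
    exact goodSet_up hsu hs
  · intro h xi hxi
    refine ⟨u, h, ?_⟩
    simp [support_monomial] at hxi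
    exact hxi ▸ le_rfl

lemma goodSet_borel {K : Type*} [Field K] (a : Fin n →₀ ℕ) (d : ℕ) :
    IsBorelFixed (Ideal.span ((fun w => monomial w (1 : K)) '' goodSet a d)) := by
  intro u hu t s hst hut
  rw [mem_span_goodSet] at hu ⊢
  obtain ⟨h1, h2⟩ := hu
  have hs' : (s : ℕ) < (t : ℕ) := hst
  have hsum : ∑ j, ((u - Finsupp.single t 1 + Finsupp.single s 1 : Fin n →₀ ℕ)) j
      = ∑ j, u j := by
    have h := Tl_move u t s hut 0
    rw [Tl_zero, Tl_zero, if_pos (Nat.zero_le _), if_pos (Nat.zero_le _)] at h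
    omega
  constructor
  · rw [hsum]; exact h1
  · intro k
    have h := Tl_move u t s hut k
    have h3 := h2 k
    rw [hsum]
    split_ifs at h <;> omega

end Back

end Stmt11Aux

open Stmt11Aux in
theorem stmt11 {K : Type*} [Field K] (n d : ℕ) (a b c : Fin n →₀ ℕ)
    (ha : a.sum (fun _ e => e) = d) (hb : b.sum (fun _ e => e) = d)
    (hc : c.sum (fun _ e => e) = d) :
    monomial c (1 : K) ∈ borelClosure (K := K) {a}
      ↔ ∀ i : Fin n, ∑ j ∈ Finset.Ici i, c j ≤ ∑ j ∈ Finset.Ici i, a j := by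
  rw [Finsupp.sum_fintype _ _ (fun _ => rfl)] at ha hc
  constructor
  · intro hmem
    have hJ0 : Ideal.span ((fun w => monomial w (1 : K)) '' goodSet a d)
        ∈ {J | IsMonomialIdeal J ∧ IsBorelFixed J ∧
            ∀ u ∈ ({a} : Set (Fin n →₀ ℕ)), monomial u (1 : K) ∈ J} := by
      refine ⟨⟨goodSet a d, rfl⟩, goodSet_borel a d, ?_⟩
      intro u hu
      rw [Set.mem_singleton_iff] at hu
      subst hu
      rw [mem_span_goodSet]
      exact ⟨by omega, fun k => by omega⟩
    have hcJ := Ideal.mem_sInf.mp hmem hJ0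
    rw [mem_span_goodSet] at hcJ
    intro i
    rw [Ici_sum, Ici_sum]
    have := hcJ.2 (i : ℕ)
    omega
  · intro h
    rw [borelClosure, Ideal.mem_sInf]
    rintro J ⟨-, hJB, hJa⟩
    have htail : ∀ k, Tl k c ≤ Tl k a := by
      intro k
      by_cases hk : k < n
      · have := h ⟨k, hk⟩
        rwa [Ici_sum, Ici_sum] at this
      · rw [Tl_of_le (by omega), Tl_of_le (by omega)]
    exact back J hJB c (∑ k ∈ Finset.range n, (Tl k a - Tl k c)) a (by omega) htail
      le_rfl (hJa a rfl)
end

section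
/- Let $I$ be a Borel fixed monomial ideal in $\Bbbk[x_1,\dots,x_n]$ minimally generated by monomials $\mathbf{m}_1,\dots,\mathbf{m}_r$, all of the same degree $d$. Then the lcm-lattice $L_I$ is ranked: for every $\mathbf{m},\mathbf{n}\in L_I$ with $\mathbf{n}$ covering $\mathbf{m}$ and $\mathbf{m}\neq\hat{0}$, one has $\deg(\mathbf{n})=\deg(\mathbf{m})+1$. -/
open MvPolynomial

private lemma sum_pair_congr {n : ℕ} (f f' : Fin n → ℕ) (s t : Fin n) (hst : s ≠ t) (c c' : ℕ)
    (hother : ∀ i, i ≠ s → i ≠ t → f' i = f i)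
    (hpair : f' s + f' t + c = f s + f t + c') :
    (∑ i, f' i) + c = (∑ i, f i) + c' := by
  classical
  have hts : t ∈ Finset.univ.erase s := Finset.mem_erase.mpr ⟨Ne.symm hst, Finset.mem_univ t⟩
  have e1 : ∀ g : Fin n → ℕ,
      ∑ i, g i = (∑ i ∈ (Finset.univ.erase s).erase t, g i) + g t + g s := by
    intro g
    have h1 := Finset.sum_erase_add (Finset.univ.erase s) g hts
    have h2 := Finset.sum_erase_add Finset.univ g (Finset.mem_univ s)
    omega
  have hcongr : ∑ i ∈ (Finset.univ.erase s).erase t, f' i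
      = ∑ i ∈ (Finset.univ.erase s).erase t, f i := by
    refine Finset.sum_congr rfl fun i hi => ?_
    have h1 := Finset.mem_erase.mp hi
    have h2 := Finset.mem_erase.mp h1.2
    exact hother i h2.1 h1.1
  rw [e1 f', e1 f, hcongr]
  omega

private lemma finsetSup_apply {r n : ℕ} (A : Finset (Fin r)) (m : Fin r → (Fin n →₀ ℕ))
    (i : Fin n) : (A.sup m) i = A.sup (fun k => m k i) := by
  classical
  induction A using Finset.induction with
  | empty => simp [Finsupp.bot_eq_zero]
  | insert _ _ ha ih => rw [Finset.sup_insert, Finset.sup_insert, Finsupp.sup_apply, ih]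

theorem stmt12 {K : Type*} [Field K] (n r d : ℕ) (m : Fin r → (Fin n →₀ ℕ))
    (hdeg : ∀ k, (m k).sum (fun _ e => e) = d)
    (hmin : ∀ k l : Fin r, m k ≤ m l → k = l)
    (hborel : IsBorelFixed (Ideal.span (Set.range fun k => monomial (m k) (1 : K)))) :
    ∀ u v : Fin n →₀ ℕ,
      (∃ T : Finset (Fin r), T.Nonempty ∧ u = T.sup m) →
      (∃ T : Finset (Fin r), T.Nonempty ∧ v = T.sup m) →
      u ≤ v → u ≠ v →
      (∀ w : Fin n →₀ ℕ, (∃ T : Finset (Fin r), T.Nonempty ∧ w = T.sup m) →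
        u ≤ w → w ≤ v → w = u ∨ w = v) →
      v.sum (fun _ e => e) = u.sum (fun _ e => e) + 1 := by
  classical
  intro u v hu hv huv hne hcov
  obtain ⟨T, hT, hTu⟩ := hu
  obtain ⟨S, hS, hSv⟩ := hv
  set I := Ideal.span (Set.range fun k => monomial (m k) (1 : K)) with hI
  have hmem : ∀ w : Fin n →₀ ℕ, monomial w (1 : K) ∈ I ↔ ∃ k, m k ≤ w := by
    intro w
    have hr : (Set.range fun k => monomial (m k) (1 : K))
        = (fun s => monomial s (1 : K)) '' (Set.range m) := by
      rw [← Set.range_comp]; rfl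
    rw [hI, hr, mem_ideal_span_monomial_image]
    simp [support_monomial]
  have hgen : ∀ k, monomial (m k) (1 : K) ∈ I := fun k => Ideal.subset_span ⟨k, rfl⟩
  have hsum : ∀ f : Fin n →₀ ℕ, f.sum (fun _ e => e) = ∑ i, f i := fun f =>
    Finsupp.sum_fintype _ _ (fun _ => rfl)
  have hdeg' : ∀ k, ∑ i, m k i = d := fun k => by rw [← hsum]; exact hdeg k
  have huvp : ∀ i, u i ≤ v i := Finsupp.le_def.mp huv
  have hgen_of : ∀ w : Fin n →₀ ℕ, monomial w (1 : K) ∈ I → (∑ i, w i = d) →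
      ∃ k, m k = w := by
    intro w hw hwd
    obtain ⟨k, hk⟩ := (hmem w).mp hw
    have hle : ∀ i, m k i ≤ w i := Finsupp.le_def.mp hk
    refine ⟨k, ?_⟩
    ext i
    by_contra hne'
    have hlt : m k i < w i := lt_of_le_of_ne (hle i) hne'
    have hslt : ∑ j, m k j < ∑ j, w j :=
      Finset.sum_lt_sum (fun j _ => hle j) ⟨i, Finset.mem_univ i, hlt⟩
    rw [hdeg' k, hwd] at hslt
    omega
  have hule : ∀ k ∈ T, m k ≤ u := fun k hk => hTu ▸ Finset.le_sup hk
  have key : ∀ e : ℕ, ∀ g : Fin n →₀ ℕ, (∃ k, m k = g) → g ≤ v →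
      (∑ i, (g i - u i)) = e + 1 →
      ∃ q : Fin n →₀ ℕ, (∃ k, m k = q) ∧ q ≤ v ∧
        ∃ t : Fin n, q t = u t + 1 ∧ ∀ j, j ≠ t → q j ≤ u j := by
    intro e
    induction e with
    | zero =>
      intro g hg hgv hex
      have hne0 : ∃ t, g t - u t ≠ 0 := by
        by_contra h
        push_neg at h
        rw [Finset.sum_eq_zero (fun j _ => h j)] at hex
        omega
      obtain ⟨t, ht⟩ := hne0
      have h1 := Finset.sum_erase_add Finset.univ (fun i => g i - u i) (Finset.mem_univ t)
      rw [hex] at h1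
      have h2 : g t - u t = 1 ∧ ∑ i ∈ Finset.univ.erase t, (g i - u i) = 0 := by omega
      refine ⟨g, hg, hgv, t, by omega, fun j hj => ?_⟩
      have := Finset.sum_eq_zero_iff.mp h2.2 j
        (Finset.mem_erase.mpr ⟨hj, Finset.mem_univ j⟩)
      omega
    | succ e ih =>
      intro g hg hgv hex
      have hgvp : ∀ i, g i ≤ v i := Finsupp.le_def.mp hgv
      have hgd : ∑ i, g i = d := by obtain ⟨k, hk⟩ := hg; rw [← hk]; exact hdeg' k
      have hne0 : (Finset.univ.filter (fun j => u j < g j)).Nonempty := by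
        by_contra h
        rw [Finset.not_nonempty_iff_eq_empty] at h
        have hz : ∀ j, g j - u j = 0 := by
          intro j
          by_contra hj
          have hmem' : j ∈ Finset.univ.filter (fun j => u j < g j) :=
            Finset.mem_filter.mpr ⟨Finset.mem_univ j, by omega⟩
          simp [h] at hmem'
        rw [Finset.sum_eq_zero (fun j _ => hz j)] at hex
        omega
      set t := (Finset.univ.filter (fun j => u j < g j)).min' hne0 with htdef
      have htmem : u t < g t :=
        (Finset.mem_filter.mp (Finset.min'_mem _ hne0)).2
      have htmin : ∀ s, u s < g s → t ≤ s := fun s hs =>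
        Finset.min'_le _ _ (Finset.mem_filter.mpr ⟨Finset.mem_univ s, hs⟩)
      by_cases hA : ∃ s, s < t ∧ g s < u s
      · -- Case A: Borel exchange from t down to s; excess drops by one.
        obtain ⟨s, hst, hsu⟩ := hA
        have hsne : s ≠ t := ne_of_lt hst
        set g' := g - Finsupp.single t 1 + Finsupp.single s 1 with hg'
        have hgI : monomial g (1 : K) ∈ I := by
          obtain ⟨k, hk⟩ := hg; rw [← hk]; exact hgen k
        have hg'I : monomial g' (1 : K) ∈ I := hborel g hgI t s hst (by omega)
        have hga : ∀ i, g' i = g i - (Finsupp.single t 1) i + (Finsupp.single s 1) i :=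
          fun i => by rw [hg', Finsupp.add_apply, Finsupp.tsub_apply]
        have hgt : g' t = g t - 1 := by
          rw [hga t, Finsupp.single_eq_same, Finsupp.single_eq_of_ne' hsne]
          omega
        have hgs : g' s = g s + 1 := by
          rw [hga s, Finsupp.single_eq_same, Finsupp.single_eq_of_ne' (Ne.symm hsne)]
          omega
        have hgo : ∀ i, i ≠ s → i ≠ t → g' i = g i := by
          intro i his hit
          rw [hga i, Finsupp.single_eq_of_ne' (Ne.symm hit),
            Finsupp.single_eq_of_ne' (Ne.symm his)]
          omega
        have hg'deg : ∑ i, g' i = d := by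
          have h := sum_pair_congr (fun i => g i) (fun i => g' i) s t hsne 0 0
            (fun i his hit => by exact hgo i his hit)
            (by omega)
          omega
        have hg'ex : (∑ i, (g' i - u i)) = e + 1 := by
          have h := sum_pair_congr (fun i => g i - u i) (fun i => g' i - u i) s t hsne 1 0
            (fun i his hit => by rw [hgo i his hit])
            (by omega)
          omega
        obtain ⟨k', hk'⟩ := hgen_of g' hg'I hg'deg
        have hg'v : g' ≤ v := by
          rw [Finsupp.le_def]
          intro i
          rcases eq_or_ne i s with hhis | his
          · rw [hhis, hgs]; have := huvp s; omega
          rcases eq_or_ne i t with hhit | hit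
          · rw [hhit, hgt]; have := hgvp t; omega
          · rw [hgo i his hit]; exact hgvp i
        exact ih g' ⟨k', hk'⟩ hg'v hg'ex
      · -- Case B: Borel exchange from some s > t up to t, applied to a generator
        -- achieving the value of u at t.
        push_neg at hA
        have hBeq : ∀ s, s < t → g s = u s := by
          intro s hs
          have h1 : ¬ u s < g s := fun h => absurd (htmin s h) (not_le.mpr hs)
          have h2 := hA s hs
          omega
        have hut : ∃ l ∈ T, m l t = u t := by
          have h1 : u t = T.sup (fun k => m k t) := by rw [hTu, finsetSup_apply]
          obtain ⟨l, hl, hl2⟩ := Finset.exists_mem_eq_sup T hT (fun k => m k t)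
          exact ⟨l, hl, by rw [h1, hl2]⟩
        obtain ⟨l, hlT, hlt⟩ := hut
        have hpup : ∀ i, m l i ≤ u i := Finsupp.le_def.mp (hule l hlT)
        have hsex : ∃ s, t < s ∧ g s < m l s := by
          by_contra h
          push_neg at h
          have hple : ∀ i, m l i ≤ g i := by
            intro i
            rcases lt_trichotomy i t with h1 | h1 | h1
            · rw [hBeq i h1]; exact hpup i
            · subst h1; omega
            · exact h i h1
          have hslt : ∑ i, m l i < ∑ i, g i :=
            Finset.sum_lt_sum (fun i _ => hple i) ⟨t, Finset.mem_univ t, by omega⟩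
          rw [hdeg' l, hgd] at hslt
          omega
        obtain ⟨s, hts, hgls⟩ := hsex
        have htsne : t ≠ s := ne_of_lt hts
        set q := m l - Finsupp.single s 1 + Finsupp.single t 1 with hqdef
        have hqI : monomial q (1 : K) ∈ I := hborel (m l) (hgen l) s t hts (by omega)
        have hqa : ∀ i, q i = m l i - (Finsupp.single s 1) i + (Finsupp.single t 1) i :=
          fun i => by rw [hqdef, Finsupp.add_apply, Finsupp.tsub_apply]
        have hqt : q t = m l t + 1 := by
          rw [hqa t, Finsupp.single_eq_same, Finsupp.single_eq_of_ne' (Ne.symm htsne)]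
          omega
        have hqs : q s = m l s - 1 := by
          rw [hqa s, Finsupp.single_eq_same, Finsupp.single_eq_of_ne' htsne]
          omega
        have hqo : ∀ i, i ≠ s → i ≠ t → q i = m l i := by
          intro i his hit
          rw [hqa i, Finsupp.single_eq_of_ne' (Ne.symm hit),
            Finsupp.single_eq_of_ne' (Ne.symm his)]
          omega
        have hqdeg : ∑ i, q i = d := by
          have h := sum_pair_congr (fun i => m l i) (fun i => q i) s t (Ne.symm htsne) 0 0
            (fun i his hit => by exact hqo i his hit)
            (by omega)
          have := hdeg' l
          omega
        obtain ⟨k', hk'⟩ := hgen_of q hqI hqdeg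
        refine ⟨q, ⟨k', hk'⟩, ?_, t, by omega, ?_⟩
        · rw [Finsupp.le_def]
          intro i
          rcases eq_or_ne i t with hhit | hit
          · rw [hhit, hqt, hlt]; have := hgvp t; omega
          rcases eq_or_ne i s with hhis | his
          · rw [hhis, hqs]; have := hpup s; have := huvp s; omega
          · rw [hqo i his hit]; have := hpup i; have := huvp i; omega
        · intro j hj
          rcases eq_or_ne j s with hhjs | hjs
          · rw [hhjs, hqs]; have := hpup s; omega
          · rw [hqo j hjs hj]; exact hpup j
  have hvle : ∀ k ∈ S, m k ≤ v := fun k hk => hSv ▸ Finset.le_sup hk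
  have hg0 : ∃ k ∈ S, ¬ m k ≤ u := by
    by_contra h
    push_neg at h
    have hvu : v ≤ u := hSv ▸ Finset.sup_le h
    exact hne (le_antisymm huv hvu)
  obtain ⟨k0, hk0S, hk0⟩ := hg0
  have hexpos : 1 ≤ ∑ i, (m k0 i - u i) := by
    have hex : ∃ i, ¬ m k0 i ≤ u i := by
      by_contra h
      push_neg at h
      exact hk0 (Finsupp.le_def.mpr h)
    obtain ⟨i, hi⟩ := hex
    calc 1 ≤ m k0 i - u i := by omega
      _ ≤ ∑ j, (m k0 j - u j) :=
        Finset.single_le_sum (f := fun j => m k0 j - u j)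
          (fun j _ => Nat.zero_le _) (Finset.mem_univ i)
  obtain ⟨q, ⟨kq, hkq⟩, hqv, t, hqt, hqo⟩ :=
    key ((∑ i, (m k0 i - u i)) - 1) (m k0) ⟨k0, rfl⟩ (hvle k0 hk0S) (by omega)
  set w := (insert kq T).sup m with hw
  have hww : w = m kq ⊔ T.sup m := Finset.sup_insert
  have hwapply : ∀ i, w i = q i ⊔ u i := by
    intro i
    rw [hww, Finsupp.sup_apply, hkq, ← hTu]
  have huw : u ≤ w := by
    rw [hTu, hw]
    exact Finset.sup_mono (Finset.subset_insert kq T)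
  have hwv : w ≤ v := by
    rw [hww]
    exact sup_le (hkq ▸ hqv) (hTu ▸ huv)
  have hwu : w ≠ u := by
    intro h
    have h2 := hwapply t
    rw [h, hqt] at h2
    omega
  have hcv := hcov w ⟨insert kq T, ⟨kq, Finset.mem_insert_self kq T⟩, hw⟩ huw hwv
  have hwveq : w = v := hcv.resolve_left hwu
  rw [hsum v, hsum u, ← hwveq]
  have h1 := Finset.sum_erase_add Finset.univ (fun i => w i) (Finset.mem_univ t)
  have h2 := Finset.sum_erase_add Finset.univ (fun i => u i) (Finset.mem_univ t)
  have hcongr : ∑ i ∈ Finset.univ.erase t, w i = ∑ i ∈ Finset.univ.erase t, u i := by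
    refine Finset.sum_congr rfl fun i hi => ?_
    have hit : i ≠ t := (Finset.mem_erase.mp hi).1
    rw [hwapply i]
    exact sup_eq_right.mpr (hqo i hit)
  have hwt : w t = u t + 1 := by
    rw [hwapply t, hqt]
    omega
  omega
end

section
/- Let $\mathbf{m}=x_{\lambda_1}^{d_1}\cdots x_{\lambda_s}^{d_s}$ with $1\leq\lambda_1<\cdots<\lambda_s$, $s\geq 2$, $\lambda_{s-1}>1$, and for $\lambda_j<k\leq\lambda_{j+1}$ ($j<s-1$, $\lambda_0=0$) set $N_k=\langle x_{\lambda_1}^{d_1}\cdots x_{\lambda_j}^{d_j}x_k^{d_{j+1}+\cdots+d_{s-1}}\rangle$. Then for every $\mu$ with $\lambda_{s-1}<\mu\leq\lambda_s$ and every $1\leq i\leq\lambda_{s-1}$: $N_i(x_1,\dots,x_\mu)^{d_s}=\sum_{k=1}^{i} N_k(x_k,\dots,x_\mu)^{d_s}$. In particular, $\langle\mathbf{m}\rangle=\sum_{k=1}^{\lambda_{s-1}} N_k(x_k,\dots,x_{\lambda_s})^{d_s}$. -/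
open MvPolynomial

namespace Borel19

variable {K : Type*} [Field K] {n : ℕ}

def G (w : Fin n →₀ ℕ) (k : ℕ) : ℕ :=
  ∑ i ∈ Finset.univ.filter (fun i : Fin n => (i : ℕ) < k), w i

lemma G_add (u v : Fin n →₀ ℕ) (k : ℕ) : G (u + v) k = G u k + G v k := by
  simp [G, Finset.sum_add_distrib]

lemma G_single (i : Fin n) (m : ℕ) (k : ℕ) :
    G (Finsupp.single i m) k = if (i : ℕ) < k then m else 0 := by
  classical
  rw [G]
  simp only [Finsupp.single_apply]
  rw [Finset.sum_ite_eq]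
  simp

lemma G_mono (w : Fin n →₀ ℕ) {k k' : ℕ} (h : k ≤ k') : G w k ≤ G w k' := by
  apply Finset.sum_le_sum_of_subset
  intro i hi
  simp only [Finset.mem_filter, Finset.mem_univ, true_and] at *
  omega

lemma G_zero' (w : Fin n →₀ ℕ) : G w 0 = 0 := by simp [G]

lemma G_succ (w : Fin n →₀ ℕ) (i : Fin n) : G w ((i : ℕ) + 1) = G w (i : ℕ) + w i := by
  classical
  rw [G, G]
  have : Finset.univ.filter (fun j : Fin n => (j : ℕ) < (i : ℕ) + 1)
      = insert i (Finset.univ.filter (fun j : Fin n => (j : ℕ) < (i : ℕ))) := by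
    ext j
    simp only [Finset.mem_filter, Finset.mem_univ, true_and, Finset.mem_insert]
    constructor
    · intro h
      rcases Nat.lt_succ_iff_lt_or_eq.mp h with h | h
      · exact Or.inr h
      · exact Or.inl (Fin.ext h)
    · rintro (rfl | h); · omega
      · omega
  rw [this, Finset.sum_insert (by simp)]
  ring

lemma G_le_of_le {u w : Fin n →₀ ℕ} (h : u ≤ w) (k : ℕ) : G u k ≤ G w k :=
  Finset.sum_le_sum fun i _ => Finsupp.le_def.mp h i

lemma G_full {w : Fin n →₀ ℕ} {k : ℕ} (h : ∀ i ∈ w.support, (i : ℕ) < k) :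
    G w k = ∑ i, w i := by
  classical
  rw [G]
  apply Finset.sum_subset (Finset.filter_subset _ _)
  intro i _ hi
  simp only [Finset.mem_filter, Finset.mem_univ, true_and] at hi
  by_contra hne
  exact hi (h i (Finsupp.mem_support_iff.mpr hne))

lemma mem_span_mono_iff {S : Set (Fin n →₀ ℕ)} {w : Fin n →₀ ℕ} :
    (monomial w 1 : MvPolynomial (Fin n) K) ∈
      Ideal.span ((fun u => monomial u (1 : K)) '' S) ↔ ∃ v ∈ S, v ≤ w := by
  rw [mem_ideal_span_monomial_image]
  simp [support_monomial, (one_ne_zero : (1 : K) ≠ 0)]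

lemma sub_add_single {u : Fin n →₀ ℕ} {t : Fin n} (ht : u t ≠ 0) :
    u - Finsupp.single t 1 + Finsupp.single t 1 = u :=
  tsub_add_cancel_of_le (Finsupp.single_le_iff.mpr (Nat.one_le_iff_ne_zero.mpr ht))

lemma G_move {u : Fin n →₀ ℕ} {t s : Fin n} (ht : u t ≠ 0) (k : ℕ) :
    G (u - Finsupp.single t 1 + Finsupp.single s 1) k
      = G (u - Finsupp.single t 1) k + (if (s : ℕ) < k then 1 else 0) := by
  rw [G_add, G_single]

lemma G_of_sub {u : Fin n →₀ ℕ} {t : Fin n} (ht : u t ≠ 0) (k : ℕ) :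
    G u k = G (u - Finsupp.single t 1) k + (if (t : ℕ) < k then 1 else 0) := by
  conv_lhs => rw [← sub_add_single ht]
  rw [G_add, G_single]

lemma dom_move {u : Fin n →₀ ℕ} {t s : Fin n} (hst : s < t) (ht : u t ≠ 0) (k : ℕ) :
    G u k ≤ G (u - Finsupp.single t 1 + Finsupp.single s 1) k := by
  rw [G_move ht, G_of_sub ht]
  have : (s : ℕ) < (t : ℕ) := hst
  split_ifs <;> omega

/-- main reachability lemma: any `w` dominating `u` lies in every Borel-fixed ideal
containing `monomial u 1`. -/
lemma reach (J : Ideal (MvPolynomial (Fin n) K)) (hB : IsBorelFixed J) :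
    ∀ Nm : ℕ, ∀ u w : Fin n →₀ ℕ,
      (∑ k ∈ Finset.range (n + 1), (G w k - G u k)) ≤ Nm →
      (∀ k, G u k ≤ G w k) → monomial u (1 : K) ∈ J → monomial w (1 : K) ∈ J := by
  intro Nm
  induction Nm with
  | zero =>
    intro u w hm hdom hu
    -- u ≤ w necessarily
    have hle : u ≤ w := by
      rw [Finsupp.le_def]
      by_contra hc
      push_neg at hc
      obtain ⟨t, ht⟩ := hc
      have h1 := hdom ((t : ℕ) + 1)
      rw [G_succ, G_succ] at h1
      have hGt : G u (t : ℕ) < G w (t : ℕ) := by omega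
      have : (t : ℕ) ∈ Finset.range (n + 1) := by
        simp [Nat.lt_succ_iff, le_of_lt t.isLt]
      have hpos : 0 < ∑ k ∈ Finset.range (n + 1), (G w k - G u k) := by
        apply Finset.sum_pos' (fun k _ => Nat.zero_le _)
        exact ⟨(t : ℕ), this, by omega⟩
      omega
    have : monomial w (1 : K) = monomial u 1 * monomial (w - u) 1 := by
      rw [monomial_mul, one_mul, add_tsub_cancel_of_le hle]
    rw [this]
    exact Ideal.mul_mem_right _ _ hu
  | succ Nm ih =>
    intro u w hm hdom hu
    by_cases hle : u ≤ w
    · have : monomial w (1 : K) = monomial u 1 * monomial (w - u) 1 := by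
        rw [monomial_mul, one_mul, add_tsub_cancel_of_le hle]
      rw [this]
      exact Ideal.mul_mem_right _ _ hu
    · rw [Finsupp.le_def] at hle
      push_neg at hle
      obtain ⟨t, ht⟩ := hle
      have hut : u t ≠ 0 := by omega
      have hGt : G u (t : ℕ) < G w (t : ℕ) := by
        have h1 := hdom ((t : ℕ) + 1)
        rw [G_succ, G_succ] at h1
        omega
      set P : ℕ → Prop := fun k => G w k ≤ G u k with hP
      have hP0 : P 0 := by simp [hP, G_zero']
      set k0 := Nat.findGreatest P (t : ℕ) with hk0
      have hspec : P k0 := Nat.findGreatest_spec (Nat.zero_le _) hP0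
      have hk0le : k0 ≤ (t : ℕ) := Nat.findGreatest_le _
      have hk0lt : k0 < (t : ℕ) := by
        rcases lt_or_eq_of_le hk0le with h | h
        · exact h
        · exfalso; rw [h] at hspec; exact absurd hspec (by simp [hP]; omega)
      set sv : Fin n := ⟨k0, lt_trans hk0lt t.isLt⟩ with hsv
      have hst : sv < t := by
        rw [Fin.lt_def]; exact hk0lt
      set u' := u - Finsupp.single t 1 + Finsupp.single sv 1 with hu'
      have hu'mem : monomial u' (1 : K) ∈ J := hB u hu t sv hst hut
      have hGu' : ∀ k, G u' k = G (u - Finsupp.single t 1) k + (if k0 < k then 1 else 0) := by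
        intro k; rw [hu', G_move hut]
      have hGu : ∀ k, G u k = G (u - Finsupp.single t 1) k + (if (t : ℕ) < k then 1 else 0) :=
        fun k => G_of_sub hut k
      have hmax : ∀ k, k0 < k → k ≤ (t : ℕ) → G u k < G w k := by
        intro k h1 h2
        have := Nat.findGreatest_is_greatest (hk0 ▸ h1) h2
        simp only [hP] at this
        omega
      have hdom' : ∀ k, G u' k ≤ G w k := by
        intro k
        have h1 := hGu' k
        have h2 := hGu k
        have h3 := hdom k
        by_cases hc1 : (t : ℕ) < k
        · have : k0 < k := lt_trans hk0lt hc1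
          simp [hc1, this] at h1 h2; omega
        · by_cases hc2 : k0 < k
          · have := hmax k hc2 (by omega)
            simp [hc1, hc2] at h1 h2; omega
          · simp [hc1, hc2] at h1 h2; omega
      have hinc : ∀ k, G u k ≤ G u' k := by
        intro k
        have h1 := hGu' k
        have h2 := hGu k
        by_cases hc1 : (t : ℕ) < k
        · have : k0 < k := lt_trans hk0lt hc1
          simp [hc1, this] at h1 h2; omega
        · by_cases hc2 : k0 < k <;> simp [hc1, hc2] at h1 h2 <;> omega
      have hstrict : G u (t : ℕ) < G u' (t : ℕ) := by
        have h1 := hGu' (t : ℕ)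
        have h2 := hGu (t : ℕ)
        simp [hk0lt] at h1 h2
        omega
      have hmeas : (∑ k ∈ Finset.range (n + 1), (G w k - G u' k)) < 
          ∑ k ∈ Finset.range (n + 1), (G w k - G u k) := by
        apply Finset.sum_lt_sum
        · intro k _
          exact Nat.sub_le_sub_left (hinc k) _
        · refine ⟨(t : ℕ), by simp [Nat.lt_succ_iff, le_of_lt t.isLt], ?_⟩
          have := hdom' (t : ℕ)
          omega
      exact ih u' w (by omega) hdom' hu'mem

/-- characterization of the Borel closure of a single monomial -/
lemma borelClosure_single_eq (u : Fin n →₀ ℕ) :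
    borelClosure (K := K) {u}
      = Ideal.span ((fun v => monomial v (1 : K)) '' {w | ∀ k, G u k ≤ G w k}) := by
  apply le_antisymm
  · apply sInf_le
    refine ⟨⟨_, rfl⟩, ?_, ?_⟩
    · intro v hv t s hst hvt
      rw [mem_span_mono_iff] at hv ⊢
      obtain ⟨w, hw, hle⟩ := hv
      simp only [Set.mem_setOf_eq] at hw
      by_cases hcase : w t = v t
      · have hwt : w t ≠ 0 := by rw [hcase]; exact hvt
        refine ⟨w - Finsupp.single t 1 + Finsupp.single s 1, ?_, ?_⟩
        · intro k; exact le_trans (hw k) (dom_move hst hwt k)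
        · rw [Finsupp.le_def]
          intro i
          have h1 := Finsupp.le_def.mp hle i
          simp only [Finsupp.coe_add, Finsupp.coe_tsub, Pi.add_apply, Pi.sub_apply,
            Finsupp.single_apply]
          by_cases h2 : t = i
          · subst h2
            have hne : s ≠ t := ne_of_lt hst
            simp [hne, hcase]
          · by_cases h3 : s = i
            · subst h3
              simp [h2]
              omega
            · simp [h2, h3]
              omega
      · refine ⟨w, hw, ?_⟩
        rw [Finsupp.le_def]
        intro i
        have h1 := Finsupp.le_def.mp hle i
        have h2 := Finsupp.le_def.mp hle t
        simp only [Finsupp.coe_add, Finsupp.coe_tsub, Pi.add_apply, Pi.sub_apply,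
          Finsupp.single_apply]
        by_cases h3 : t = i
        · subst h3; simp; omega
        · by_cases h4 : s = i
          · subst h4; simp [h3]; omega
          · simp [h3, h4]; omega
    · intro u' hu'
      rw [Set.mem_singleton_iff] at hu'
      subst hu'
      exact Ideal.subset_span ⟨_, fun k => le_refl _, rfl⟩
  · rw [Ideal.span_le]
    rintro p ⟨w, hw, rfl⟩
    simp only [Set.mem_setOf_eq] at hw
    rw [SetLike.mem_coe, borelClosure, Submodule.mem_sInf]
    rintro J ⟨-, hB, hu⟩
    exact reach J hB _ u w le_rfl hw (hu u rfl)

def S (k b : ℕ) (w : Fin n →₀ ℕ) : ℕ :=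
  ∑ i ∈ Finset.univ.filter (fun i : Fin n => k ≤ (i : ℕ) ∧ (i : ℕ) ≤ b), w i

lemma sum_single_univ (t : Fin n) (m : ℕ) : (∑ i, Finsupp.single t m i) = m := by
  classical
  simp only [Finsupp.single_apply]
  rw [Finset.sum_ite_eq]
  simp

lemma S_add (k b : ℕ) (u v : Fin n →₀ ℕ) : S k b (u + v) = S k b u + S k b v := by
  simp [S, Finset.sum_add_distrib]

lemma S_single (k b : ℕ) (t : Fin n) (m : ℕ) :
    S k b (Finsupp.single t m) = if k ≤ (t : ℕ) ∧ (t : ℕ) ≤ b then m else 0 := by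
  classical
  rw [S]
  simp only [Finsupp.single_apply]
  rw [Finset.sum_ite_eq]
  simp

lemma S_eq_zero {k b : ℕ} (h : b < k) (w : Fin n →₀ ℕ) : S k b w = 0 := by
  apply Finset.sum_eq_zero
  intro i hi
  simp only [Finset.mem_filter, Finset.mem_univ, true_and] at hi
  omega

lemma G_add_S (w : Fin n →₀ ℕ) {k b : ℕ} (h : k ≤ b + 1) : G w k + S k b w = G w (b + 1) := by
  classical
  have e1 : (Finset.univ.filter (fun i : Fin n => (i : ℕ) < b + 1)).filter
      (fun i : Fin n => (i : ℕ) < k) = Finset.univ.filter (fun i : Fin n => (i : ℕ) < k) := by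
    ext i; simp only [Finset.mem_filter, Finset.mem_univ, true_and]; omega
  have e2 : (Finset.univ.filter (fun i : Fin n => (i : ℕ) < b + 1)).filter
      (fun i : Fin n => ¬ (i : ℕ) < k) = Finset.univ.filter (fun i : Fin n => k ≤ (i : ℕ) ∧ (i : ℕ) ≤ b) := by
    ext i; simp only [Finset.mem_filter, Finset.mem_univ, true_and, not_lt]; omega
  rw [G, G, S, ← Finset.sum_filter_add_sum_filter_not
    (Finset.univ.filter (fun i : Fin n => (i : ℕ) < b + 1)) (fun i : Fin n => (i : ℕ) < k) w, e1, e2]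

/-- greedy extraction of `D` top units within the window `[c, b]`. -/
lemma EXT (T : ℕ → ℕ) (Dtot c b : ℕ) :
    ∀ D (w : Fin n →₀ ℕ),
      (∀ k, k ≤ c → T k ≤ G w k) →
      D ≤ S c b w →
      (∀ k, c < k → Dtot + D ≤ G w k + min D (S k b w)) →
      ∃ v r : Fin n →₀ ℕ, w = v + r ∧
        (∀ k, (if k ≤ c then T k else Dtot) ≤ G v k) ∧
        (∀ i ∈ r.support, c ≤ (i : ℕ) ∧ (i : ℕ) ≤ b) ∧ (∑ i, r i) = D := by
  intro D
  induction D with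
  | zero =>
    intro w h1 h2 h3
    refine ⟨w, 0, by simp, ?_, by simp, by simp⟩
    intro k
    split_ifs with h
    · exact h1 k h
    · have := h3 k (by omega); simpa using this
  | succ D ih =>
    intro w h1 h2 h3
    classical
    -- the window part of the support is nonempty
    have hpos : S c b w ≠ 0 := by omega
    obtain ⟨t, htmem, htne⟩ := Finset.exists_ne_zero_of_sum_ne_zero hpos
    simp only [Finset.mem_filter, Finset.mem_univ, true_and] at htmem
    set W : Finset (Fin n) := (Finset.univ.filter
      (fun i : Fin n => c ≤ (i : ℕ) ∧ (i : ℕ) ≤ b)).filter (fun i => w i ≠ 0) with hW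
    have hWne : W.Nonempty := ⟨t, by simp [hW, htmem, htne]⟩
    set tm := W.max' hWne with htm
    have htmW : tm ∈ W := W.max'_mem hWne
    simp only [hW, Finset.mem_filter, Finset.mem_univ, true_and] at htmW
    obtain ⟨⟨hct, htb⟩, hwt⟩ := htmW
    have hmaxW : ∀ i : Fin n, c ≤ (i : ℕ) → (i : ℕ) ≤ b → w i ≠ 0 → (i : ℕ) ≤ (tm : ℕ) := by
      intro i h4 h5 h6
      exact Finset.le_max' W i (by simp [hW, h4, h5, h6])
    set w' := w - Finsupp.single tm 1 with hw'
    have hsplit : w' + Finsupp.single tm 1 = w := sub_add_single hwt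
    have hGw : ∀ k, G w k = G w' k + (if (tm : ℕ) < k then 1 else 0) := by
      intro k; conv_lhs => rw [← hsplit]
      rw [G_add, G_single]
    have hSw : ∀ k, S k b w = S k b w' + (if k ≤ (tm : ℕ) then 1 else 0) := by
      intro k; conv_lhs => rw [← hsplit]
      rw [S_add, S_single]
      congr 1
      by_cases h : k ≤ (tm : ℕ) <;> simp [h, htb]
    have hStop : ∀ k, (tm : ℕ) < k → S k b w = 0 := by
      intro k hk
      apply Finset.sum_eq_zero
      intro i hi
      simp only [Finset.mem_filter, Finset.mem_univ, true_and] at hi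
      by_contra hne
      have := hmaxW i (by omega) hi.2 hne
      omega
    obtain ⟨v, r', hr1, hr2, hr3, hr4⟩ := ih w'
      (by
        intro k hk
        have := h1 k hk
        have hg := hGw k
        have : ¬ ((tm : ℕ) < k) := by omega
        simp [this] at hg
        omega)
      (by have := hSw c; simp [hct] at this; omega)
      (by
        intro k hk
        have H := h3 k hk
        have hg := hGw k
        have hs := hSw k
        by_cases hcase : k ≤ (tm : ℕ)
        · have : ¬ ((tm : ℕ) < k) := by omega
          simp [hcase, this] at hg hs
          omega
        · have h0 := hStop k (by omega)
          simp [hcase, not_le.mp hcase] at hg hs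
          omega)
    refine ⟨v, r' + Finsupp.single tm 1, ?_, hr2, ?_, ?_⟩
    · rw [← hsplit, hr1, add_assoc]
    · intro i hi
      have : r' i + Finsupp.single tm 1 i ≠ 0 := by
        have := Finsupp.mem_support_iff.mp hi
        simpa using this
      by_cases hit : i = tm
      · subst hit; exact ⟨hct, htb⟩
      · apply hr3
        rw [Finsupp.mem_support_iff]
        intro h0
        rw [h0] at this
        simp [Finsupp.single_apply, Ne.symm hit] at this
    · rw [Finset.sum_congr rfl (fun i _ => Finsupp.add_apply r' (Finsupp.single tm 1) i),
        Finset.sum_add_distrib, hr4, sum_single_univ]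

/-- choose the cut `c` and extract -/
lemma KEY (T : ℕ → ℕ) (Dtot D iv b : ℕ) (hivb : iv < b + 1) (w : Fin n →₀ ℕ)
    (h1 : ∀ k, k ≤ iv → T k ≤ G w k)
    (h2 : Dtot + D ≤ G w (b + 1))
    (h3 : ∀ k, iv < k → Dtot ≤ G w k) :
    ∃ c, c ≤ iv ∧ ∃ v r : Fin n →₀ ℕ, w = v + r ∧
      (∀ k, (if k ≤ c then T k else Dtot) ≤ G v k) ∧
      (∀ i ∈ r.support, c ≤ (i : ℕ) ∧ (i : ℕ) ≤ b) ∧ (∑ i, r i) = D := by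
  classical
  set P : ℕ → Prop := fun k => D ≤ S k b w with hP
  have hP0 : P 0 := by
    have := G_add_S w (k := 0) (b := b) (by omega)
    rw [G_zero'] at this
    simp only [hP]
    omega
  set c := Nat.findGreatest P iv with hc
  have hPc : P c := Nat.findGreatest_spec (Nat.zero_le _) hP0
  have hcle : c ≤ iv := Nat.findGreatest_le _
  refine ⟨c, hcle, ?_⟩
  apply EXT
  · intro k hk; exact h1 k (by omega)
  · exact hPc
  · intro k hk
    by_cases hD : D ≤ S k b w
    · have hkiv : iv < k := by
        by_contra hkle
        exact Nat.findGreatest_is_greatest hk (by omega) hD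
      have := h3 k hkiv
      have : min D (S k b w) = D := min_eq_left hD
      omega
    · have hmin : min D (S k b w) = S k b w := min_eq_right (by omega)
      by_cases hkb : k ≤ b + 1
      · have := G_add_S w hkb
        omega
      · have h0 : S k b w = 0 := S_eq_zero (by omega) w
        have := G_mono w (le_of_lt (not_le.mp hkb) : b + 1 ≤ k)
        omega

lemma span_monomial_mul (S1 S2 : Set (Fin n →₀ ℕ)) :
    Ideal.span ((fun u => monomial u (1 : K)) '' S1) *
      Ideal.span ((fun u => monomial u (1 : K)) '' S2)
      = Ideal.span ((fun u => monomial u (1 : K)) '' (Set.image2 (· + ·) S1 S2)) := by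
  rw [Ideal.span_mul_span']
  congr 1
  ext p
  constructor
  · rintro ⟨q1, ⟨u1, hu1, rfl⟩, q2, ⟨u2, hu2, rfl⟩, rfl⟩
    exact ⟨u1 + u2, ⟨u1, hu1, u2, hu2, rfl⟩, by simp [monomial_mul]⟩
  · rintro ⟨u, ⟨u1, hu1, u2, hu2, rfl⟩, rfl⟩
    exact ⟨monomial u1 1, ⟨u1, hu1, rfl⟩, monomial u2 1, ⟨u2, hu2, rfl⟩, by simp [monomial_mul]⟩

def PowSet (a b D : ℕ) : Set (Fin n →₀ ℕ) :=
  {r | (∀ i ∈ r.support, a ≤ (i : ℕ) + 1 ∧ (i : ℕ) + 1 ≤ b) ∧ (∑ i, r i) = D}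

lemma varsIdeal_eq (a b : ℕ) :
    varsIdeal K n a b = Ideal.span ((fun u => monomial u (1 : K)) ''
      ((fun i : Fin n => Finsupp.single i 1) ''
        {i : Fin n | a ≤ (i : ℕ) + 1 ∧ (i : ℕ) + 1 ≤ b})) := by
  have hX : ∀ i : Fin n, (X i : MvPolynomial (Fin n) K) = monomial (Finsupp.single i 1) 1 :=
    fun i => rfl
  rw [varsIdeal]
  congr 1
  ext p
  constructor
  · rintro ⟨i, h1, h2, rfl⟩
    exact ⟨Finsupp.single i 1, ⟨i, ⟨h1, h2⟩, rfl⟩, (hX i).symm⟩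
  · rintro ⟨u, ⟨i, ⟨h1, h2⟩, rfl⟩, rfl⟩
    exact ⟨i, h1, h2, hX i⟩

lemma varsIdeal_pow (a b D : ℕ) :
    (varsIdeal K n a b) ^ D
      = Ideal.span ((fun u => monomial u (1 : K)) '' PowSet a b D) := by
  induction D with
  | zero =>
    rw [pow_zero]
    have : PowSet (n := n) a b 0 = {0} := by
      ext r
      simp only [PowSet, Set.mem_setOf_eq, Set.mem_singleton_iff]
      constructor
      · rintro ⟨-, h2⟩
        ext i
        have := Finset.sum_eq_zero_iff.mp h2 i (Finset.mem_univ i)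
        simpa using this
      · rintro rfl; simp
    rw [this]
    simp only [Set.image_singleton]
    have h1 : (monomial (0 : Fin n →₀ ℕ)) (1 : K) = 1 := by
      simp [monomial_zero']
    rw [h1, Ideal.span_singleton_one, Ideal.one_eq_top]
  | succ D ih =>
    rw [pow_succ, ih, varsIdeal_eq, span_monomial_mul]
    have hset : Set.image2 (· + ·) (PowSet (n := n) a b D)
        ((fun i : Fin n => Finsupp.single i 1) '' {i : Fin n | a ≤ (i : ℕ) + 1 ∧ (i : ℕ) + 1 ≤ b})
        = PowSet a b (D + 1) := by
      ext r
      simp only [Set.mem_image2, Set.mem_image, Set.mem_setOf_eq, PowSet]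
      constructor
      · rintro ⟨r1, ⟨h1, h2⟩, u, ⟨i, ⟨hi1, hi2⟩, rfl⟩, rfl⟩
        constructor
        · intro jj hjj
          have hne : r1 jj + Finsupp.single i 1 jj ≠ 0 := by
            have := Finsupp.mem_support_iff.mp hjj
            simpa using this
          by_cases hij : jj = i
          · subst hij; exact ⟨hi1, hi2⟩
          · apply h1
            rw [Finsupp.mem_support_iff]
            intro h0
            rw [h0] at hne
            simp [Finsupp.single_apply, Ne.symm hij] at hne
        · rw [Finset.sum_congr rfl (fun j _ => Finsupp.add_apply r1 (Finsupp.single i 1) j),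
            Finset.sum_add_distrib, h2, sum_single_univ]
      · rintro ⟨h1, h2⟩
        have hne : ∃ i, r i ≠ 0 := by
          by_contra hc
          push_neg at hc
          have : (∑ i, r i) = 0 := Finset.sum_eq_zero (fun i _ => hc i)
          omega
        obtain ⟨i, hi⟩ := hne
        have hle : Finsupp.single i 1 ≤ r :=
          Finsupp.single_le_iff.mpr (Nat.one_le_iff_ne_zero.mpr hi)
        have hsplit : (r - Finsupp.single i 1) + Finsupp.single i 1 = r :=
          tsub_add_cancel_of_le hle
        refine ⟨r - Finsupp.single i 1, ⟨?_, ?_⟩, Finsupp.single i 1,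
          ⟨i, h1 i (Finsupp.mem_support_iff.mpr hi), rfl⟩, hsplit⟩
        · intro jj hjj
          apply h1
          rw [Finsupp.mem_support_iff] at hjj ⊢
          intro h0
          apply hjj
          rw [Finsupp.tsub_apply, h0]
          simp
        · have : (∑ j, ((r - Finsupp.single i 1) : Fin n →₀ ℕ) j) + (∑ j, Finsupp.single i 1 j)
              = ∑ j, r j := by
            rw [← Finset.sum_add_distrib]
            apply Finset.sum_congr rfl
            intro j _
            rw [← Finsupp.add_apply, hsplit]
          rw [sum_single_univ] at this
          omega
    rw [hset]

lemma ideal_sum_le {α : Type*} (F : Finset α) (f : α → Ideal (MvPolynomial (Fin n) K))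
    (J : Ideal (MvPolynomial (Fin n) K)) : (∀ κ ∈ F, f κ ≤ J) → (∑ κ ∈ F, f κ) ≤ J := by
  classical
  induction F using Finset.induction with
  | empty => intro _; simp
  | @insert a F' hx ih =>
    intro h
    rw [Finset.sum_insert hx, Submodule.add_eq_sup]
    exact sup_le (h a (Finset.mem_insert_self a F'))
      (ih (fun κ hκ => h κ (Finset.mem_insert_of_mem hκ)))

lemma ideal_le_sum {α : Type*} (F : Finset α) (f : α → Ideal (MvPolynomial (Fin n) K))
    {κ : α} (hκ : κ ∈ F) : f κ ≤ ∑ κ' ∈ F, f κ' :=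
  Finset.single_le_sum (f := f) (fun i _ => bot_le) hκ


lemma G_finsetSum {α : Type*} (F : Finset α) (f : α → (Fin n →₀ ℕ)) (k : ℕ) :
    G (∑ i ∈ F, f i) k = ∑ i ∈ F, G (f i) k := by
  simp only [G, Finsupp.finset_sum_apply]
  exact Finset.sum_comm

end Borel19

section TheoremProof
open Borel19

theorem stmt19 {K : Type*} [Field K] (n s : ℕ) (hs : 2 ≤ s)
    (lam : Fin s → Fin n) (hlam : StrictMono lam)
    (hlam1 : 1 ≤ (lam ⟨s - 2, by omega⟩ : ℕ))
    (d : Fin s → ℕ) (hd : ∀ j, 1 ≤ d j)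
    (N : Fin n → Ideal (MvPolynomial (Fin n) K))
    (hN : ∀ (κ : Fin n) (j : ℕ) (hj : j < s - 1),
      (∀ i : Fin s, (i : ℕ) < j → (lam i : ℕ) < (κ : ℕ)) →
      (κ : ℕ) ≤ (lam ⟨j, Nat.lt_of_lt_of_le hj (Nat.sub_le s 1)⟩ : ℕ) →
      N κ = borelClosure (K := K)
        {(∑ i ∈ Finset.univ.filter (fun i : Fin s => (i : ℕ) < j),
            Finsupp.single (lam i) (d i))
          + Finsupp.single κ
              (∑ i ∈ Finset.univ.filter (fun i : Fin s => j ≤ (i : ℕ) ∧ (i : ℕ) < s - 1),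
                d i)})
    :
    (∀ μ : ℕ, (lam ⟨s - 2, by omega⟩ : ℕ) + 1 < μ →
      μ ≤ (lam ⟨s - 1, by omega⟩ : ℕ) + 1 →
      ∀ ι : Fin n, (ι : ℕ) ≤ (lam ⟨s - 2, by omega⟩ : ℕ) →
        N ι * (varsIdeal K n 1 μ) ^ (d ⟨s - 1, by omega⟩)
          = ∑ κ ∈ Finset.univ.filter (fun κ : Fin n => κ ≤ ι),
              N κ * (varsIdeal K n ((κ : ℕ) + 1) μ) ^ (d ⟨s - 1, by omega⟩))
    ∧ borelClosure (K := K) {∑ i, Finsupp.single (lam i) (d i)}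
        = ∑ κ ∈ Finset.univ.filter
              (fun κ : Fin n => (κ : ℕ) ≤ (lam ⟨s - 2, by omega⟩ : ℕ)),
            N κ * (varsIdeal K n ((κ : ℕ) + 1) ((lam ⟨s - 1, by omega⟩ : ℕ) + 1))
              ^ (d ⟨s - 1, by omega⟩) := by
  classical
  have hs2 : s - 2 < s := by omega
  have hs1 : s - 1 < s := by omega
  set c2 : Fin s := ⟨s - 2, hs2⟩ with hc2def
  set c1 : Fin s := ⟨s - 1, hs1⟩ with hc1def
  set L2 : ℕ := (lam c2 : ℕ) with hL2def
  set L1 : ℕ := (lam c1 : ℕ) with hL1def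
  set ds : ℕ := d c1 with hdsdef
  set T : ℕ → ℕ := fun k =>
    ∑ i ∈ Finset.univ.filter (fun i : Fin s => (i : ℕ) < s - 1 ∧ (lam i : ℕ) < k), d i
    with hTdef
  set Dtot : ℕ :=
    ∑ i ∈ Finset.univ.filter (fun i : Fin s => (i : ℕ) < s - 1), d i with hDtotdef
  set Sk : ℕ → Set (Fin n →₀ ℕ) := fun c =>
    {w | ∀ k, (if k ≤ c then T k else Dtot) ≤ G w k} with hSkdef
  -- basic facts
  have hL21 : L2 < L1 := by
    have : c2 < c1 := by rw [Fin.lt_def]; simp [hc2def, hc1def]; omega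
    exact hlam this
  have hTle : ∀ k, T k ≤ Dtot := by
    intro k
    apply Finset.sum_le_sum_of_subset
    intro i hi
    simp only [Finset.mem_filter, Finset.mem_univ, true_and] at hi ⊢
    exact hi.1
  have hTtop : ∀ k, L2 < k → T k = Dtot := by
    intro k hk
    apply Finset.sum_congr _ (fun _ _ => rfl)
    ext i
    simp only [Finset.mem_filter, Finset.mem_univ, true_and, and_iff_left_iff_imp]
    intro hi
    have : i ≤ c2 := by rw [Fin.le_def]; simp [hc2def]; omega
    have := hlam.monotone this
    rw [Fin.le_def] at this
    omega
  have hT1 : T (L1 + 1) = Dtot := by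
    apply Finset.sum_congr _ (fun _ _ => rfl)
    ext i
    simp only [Finset.mem_filter, Finset.mem_univ, true_and, and_iff_left_iff_imp]
    intro _
    have : i ≤ c1 := by rw [Fin.le_def]; simp [hc1def]; omega
    have := hlam.monotone this
    rw [Fin.le_def] at this
    omega
  -- characterize each N κ
  have NG : ∀ κ : Fin n, (κ : ℕ) ≤ L2 →
      N κ = Ideal.span ((fun u => monomial u (1 : K)) '' Sk (κ : ℕ)) := by
    intro κ hκ
    set Q : ℕ → Prop := fun j => j < s - 1 ∧
      ((κ : ℕ) ≤ if h : j < s then (lam ⟨j, h⟩ : ℕ) else 0) with hQdef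
    have hex : ∃ j, Q j := by
      refine ⟨s - 2, by omega, ?_⟩
      rw [dif_pos hs2]
      exact hκ
    set j0 := Nat.find hex with hj0def
    obtain ⟨hj0, hj0b⟩ := Nat.find_spec hex
    set jF : Fin s := ⟨j0, Nat.lt_of_lt_of_le hj0 (Nat.sub_le s 1)⟩ with hjFdef
    rw [dif_pos (by omega : j0 < s)] at hj0b
    have hj0b' : (κ : ℕ) ≤ (lam jF : ℕ) := hj0b
    have hmin : ∀ i : Fin s, (i : ℕ) < j0 → (lam i : ℕ) < (κ : ℕ) := by
      intro i hi
      have hnq := Nat.find_min hex hi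
      simp only [hQdef] at hnq
      push_neg at hnq
      have h1 : (i : ℕ) < s - 1 := by omega
      have h2 := hnq h1
      rw [dif_pos i.isLt] at h2
      simpa using h2
    have hNκ := hN κ j0 hj0 hmin hj0b'
    rw [hNκ, borelClosure_single_eq]
    have hGu : ∀ k, G ((∑ i ∈ Finset.univ.filter (fun i : Fin s => (i : ℕ) < j0),
        Finsupp.single (lam i) (d i))
          + Finsupp.single κ
              (∑ i ∈ Finset.univ.filter (fun i : Fin s => j0 ≤ (i : ℕ) ∧ (i : ℕ) < s - 1),
                d i)) k = if k ≤ (κ : ℕ) then T k else Dtot := by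
      intro k
      rw [G_add, G_finsetSum, G_single,
        Finset.sum_congr rfl (fun (i : Fin s) _ => G_single (lam i) (d i) k)]
      by_cases hk : k ≤ (κ : ℕ)
      · rw [if_pos hk, if_neg (by omega), add_zero, ← Finset.sum_filter]
        have hfe : (Finset.univ.filter (fun i : Fin s => (i : ℕ) < j0)).filter
            (fun i => (lam i : ℕ) < k)
            = Finset.univ.filter (fun i : Fin s => (i : ℕ) < s - 1 ∧ (lam i : ℕ) < k) := by
          ext i
          simp only [Finset.mem_filter, Finset.mem_univ, true_and]
          constructor
          · rintro ⟨h1, h2⟩; exact ⟨by omega, h2⟩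
          · rintro ⟨h1, h2⟩
            refine ⟨?_, h2⟩
            by_contra hc
            push_neg at hc
            have hle : jF ≤ i := by rw [Fin.le_def]; exact hc
            have hmono := hlam.monotone hle
            rw [Fin.le_def] at hmono
            omega
        rw [hfe, hTdef]
      · rw [if_neg hk, if_pos (by omega)]
        have hall : ∀ i ∈ Finset.univ.filter (fun i : Fin s => (i : ℕ) < j0),
            (if (lam i : ℕ) < k then d i else 0) = d i := by
          intro i hi
          simp only [Finset.mem_filter, Finset.mem_univ, true_and] at hi
          exact if_pos (by have := hmin i hi; omega)
        rw [Finset.sum_congr rfl hall]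
        have e1 : (Finset.univ.filter (fun i : Fin s => (i : ℕ) < s - 1)).filter
            (fun i : Fin s => (i : ℕ) < j0)
            = Finset.univ.filter (fun i : Fin s => (i : ℕ) < j0) := by
          ext i
          simp only [Finset.mem_filter, Finset.mem_univ, true_and]
          omega
        have e2 : (Finset.univ.filter (fun i : Fin s => (i : ℕ) < s - 1)).filter
            (fun i : Fin s => ¬ (i : ℕ) < j0)
            = Finset.univ.filter (fun i : Fin s => j0 ≤ (i : ℕ) ∧ (i : ℕ) < s - 1) := by
          ext i
          simp only [Finset.mem_filter, Finset.mem_univ, true_and, not_lt]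
          omega
        conv_rhs => rw [hDtotdef]
        rw [← Finset.sum_filter_add_sum_filter_not
          (Finset.univ.filter (fun i : Fin s => (i : ℕ) < s - 1))
          (fun i : Fin s => (i : ℕ) < j0) d, e1, e2]
    congr 1
    apply congrArg
    ext w
    simp only [Set.mem_setOf_eq, hSkdef]
    exact forall_congr' (fun k => iff_of_eq (congrArg (fun z => z ≤ G w k) (hGu k)))
  -- subset relations between generator families
  have hPowSub : ∀ a1 a2 bb D : ℕ, a2 ≤ a1 →
      PowSet (n := n) a1 bb D ⊆ PowSet a2 bb D := by
    rintro a1 a2 bb D h r ⟨h1, h2⟩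
    exact ⟨fun i hi => ⟨le_trans h (h1 i hi).1, (h1 i hi).2⟩, h2⟩
  have hSkSub : ∀ c c' : ℕ, c ≤ c' → Sk c ⊆ Sk c' := by
    intro c c' hcc w hw
    intro k
    have h1 : (if k ≤ c then T k else Dtot) ≤ G w k := hw k
    have h2 := hTle k
    split_ifs with hx
    · split_ifs at h1 with hy
      · exact h1
      · omega
    · split_ifs at h1 with hy
      · omega
      · exact h1
  -- rewrite products as monomial spans
  have key_eq : ∀ (κ : Fin n) (a μ : ℕ), (κ : ℕ) ≤ L2 →
      N κ * (varsIdeal K n a μ) ^ ds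
        = Ideal.span ((fun u => monomial u (1 : K)) ''
            Set.image2 (· + ·) (Sk (κ : ℕ)) (PowSet a μ ds)) := by
    intro κ a μ hκ
    rw [NG κ hκ, varsIdeal_pow, span_monomial_mul]
  -- Part 1
  have P1 : ∀ μ : ℕ, L2 + 1 < μ → μ ≤ L1 + 1 → ∀ ι : Fin n, (ι : ℕ) ≤ L2 →
      N ι * (varsIdeal K n 1 μ) ^ ds
        = ∑ κ ∈ Finset.univ.filter (fun κ : Fin n => κ ≤ ι),
            N κ * (varsIdeal K n ((κ : ℕ) + 1) μ) ^ ds := by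
    intro μ hμ1 hμ2 ι hι
    have hbμ : (μ - 1) + 1 = μ := by omega
    set b : ℕ := μ - 1 with hbdef
    apply le_antisymm
    · rw [key_eq ι 1 μ hι, Ideal.span_le]
      rintro p ⟨w, hw, rfl⟩
      obtain ⟨v, hv, r, hr, rfl⟩ := hw
      obtain ⟨hr1, hr2⟩ := hr
      have hvk : ∀ k, (if k ≤ (ι : ℕ) then T k else Dtot) ≤ G v k := hv
      have hGr_full : G r (b + 1) = ds := by
        rw [G_full, hr2]
        intro i hi
        have := (hr1 i hi).2
        omega
      obtain ⟨c, hcle, v', r', hsplit, hv', hr'supp, hr'deg⟩ :=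
        KEY T Dtot ds (ι : ℕ) b (by omega) (v + r)
          (by
            intro k hk
            have h1 := hvk k
            rw [if_pos hk] at h1
            rw [G_add]
            omega)
          (by
            have h1 := hvk (b + 1)
            rw [if_neg (by omega)] at h1
            rw [G_add, hGr_full]
            omega)
          (by
            intro k hk
            have h1 := hvk k
            rw [if_neg (by omega)] at h1
            rw [G_add]
            omega)
      have hcn : c < n := Nat.lt_of_le_of_lt hcle ι.isLt
      have hmem : monomial (v + r) (1 : K)
          ∈ N ⟨c, hcn⟩ * (varsIdeal K n ((⟨c, hcn⟩ : Fin n) + 1 : ℕ) μ) ^ ds := by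
        rw [key_eq ⟨c, hcn⟩ _ μ (le_trans hcle hι)]
        refine Ideal.subset_span ⟨v + r, ?_, rfl⟩
        rw [hsplit]
        refine ⟨v', hv', r', ⟨?_, hr'deg⟩, rfl⟩
        intro i hi
        obtain ⟨ha1, ha2⟩ := hr'supp i hi
        exact ⟨by show c + 1 ≤ (i : ℕ) + 1; omega, by omega⟩
      have hfin : (⟨c, hcn⟩ : Fin n) ∈ Finset.univ.filter (fun κ : Fin n => κ ≤ ι) :=
        Finset.mem_filter.mpr ⟨Finset.mem_univ _, by rw [Fin.le_def]; exact hcle⟩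
      exact ideal_le_sum _ (fun κ : Fin n => N κ * (varsIdeal K n ((κ : ℕ) + 1) μ) ^ ds)
        hfin hmem
    · apply ideal_sum_le
      intro κ hκF
      rw [Finset.mem_filter] at hκF
      have hκι : (κ : ℕ) ≤ (ι : ℕ) := hκF.2
      rw [key_eq κ ((κ : ℕ) + 1) μ (le_trans hκι hι), key_eq ι 1 μ hι]
      apply Ideal.span_mono
      apply Set.image_mono
      exact Set.image2_subset (hSkSub _ _ hκι) (hPowSub _ _ _ _ (by omega))
  -- the full monomial
  have hGm : ∀ k, G (∑ i, Finsupp.single (lam i) (d i)) k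
      = T k + (if L1 < k then ds else 0) := by
    intro k
    rw [G_finsetSum, Finset.sum_congr rfl (fun (i : Fin s) _ => G_single (lam i) (d i) k),
      ← Finset.sum_filter_add_sum_filter_not Finset.univ (fun i : Fin s => (i : ℕ) < s - 1)
        (fun i : Fin s => if (lam i : ℕ) < k then d i else 0)]
    congr 1
    · rw [← Finset.sum_filter, Finset.filter_filter, hTdef]
    · have hone : Finset.univ.filter (fun i : Fin s => ¬ (i : ℕ) < s - 1) = {c1} := by
        ext i
        simp only [Finset.mem_filter, Finset.mem_univ, true_and, not_lt,
          Finset.mem_singleton]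
        constructor
        · intro h
          have := i.isLt
          rw [hc1def]
          exact Fin.ext (by show (i : ℕ) = s - 1; omega)
        · intro h
          rw [h, hc1def]
      rw [hone, Finset.sum_singleton]
  -- Part 2
  have P2 : borelClosure (K := K) {∑ i, Finsupp.single (lam i) (d i)}
      = ∑ κ ∈ Finset.univ.filter (fun κ : Fin n => (κ : ℕ) ≤ L2),
          N κ * (varsIdeal K n ((κ : ℕ) + 1) (L1 + 1)) ^ ds := by
    rw [borelClosure_single_eq]
    apply le_antisymm
    · rw [Ideal.span_le]
      rintro p ⟨w, hw, rfl⟩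
      simp only [Set.mem_setOf_eq] at hw
      have hw' : ∀ k, T k + (if L1 < k then ds else 0) ≤ G w k := by
        intro k
        have := hw k
        rw [hGm k] at this
        exact this
      obtain ⟨c, hcle, v', r', hsplit, hv', hr'supp, hr'deg⟩ :=
        KEY T Dtot ds L2 L1 (by omega) w
          (by
            intro k hk
            have h1 := hw' k
            rw [if_neg (by omega)] at h1
            omega)
          (by
            have h1 := hw' (L1 + 1)
            rw [if_pos (by omega)] at h1
            omega)
          (by
            intro k hk
            have h1 := hw' k
            have h2 := hTtop k hk
            split_ifs at h1 <;> omega)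
      have hcn : c < n := Nat.lt_of_le_of_lt hcle (lam c2).isLt
      have hmem : monomial w (1 : K)
          ∈ N ⟨c, hcn⟩ * (varsIdeal K n ((⟨c, hcn⟩ : Fin n) + 1 : ℕ) (L1 + 1)) ^ ds := by
        rw [key_eq ⟨c, hcn⟩ _ (L1 + 1) hcle]
        refine Ideal.subset_span ⟨w, ?_, rfl⟩
        rw [hsplit]
        refine ⟨v', hv', r', ⟨?_, hr'deg⟩, rfl⟩
        intro i hi
        obtain ⟨ha1, ha2⟩ := hr'supp i hi
        exact ⟨by show c + 1 ≤ (i : ℕ) + 1; omega, by omega⟩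
      have hfin : (⟨c, hcn⟩ : Fin n) ∈ Finset.univ.filter
          (fun κ : Fin n => (κ : ℕ) ≤ L2) :=
        Finset.mem_filter.mpr ⟨Finset.mem_univ _, hcle⟩
      exact ideal_le_sum _
        (fun κ : Fin n => N κ * (varsIdeal K n ((κ : ℕ) + 1) (L1 + 1)) ^ ds) hfin hmem
    · apply ideal_sum_le
      intro κ hκF
      rw [Finset.mem_filter] at hκF
      have hκL2 : (κ : ℕ) ≤ L2 := hκF.2
      rw [key_eq κ ((κ : ℕ) + 1) (L1 + 1) hκL2]
      apply Ideal.span_mono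
      apply Set.image_mono
      rintro w ⟨v, hv, r, hr, rfl⟩
      obtain ⟨hr1, hr2⟩ := hr
      simp only [Set.mem_setOf_eq]
      intro k
      rw [hGm k, G_add]
      have hvk : (if k ≤ (κ : ℕ) then T k else Dtot) ≤ G v k := hv k
      have hTk := hTle k
      by_cases hkL1 : L1 < k
      · rw [if_pos hkL1]
        have hrfull : G r k = ds := by
          rw [G_full, hr2]
          intro i hi
          have := (hr1 i hi).2
          omega
        rw [if_neg (by omega)] at hvk
        omega
      · rw [if_neg hkL1]
        split_ifs at hvk <;> omega
  exact ⟨P1, P2⟩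

end TheoremProof
end
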